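/- arXiv:2301.05678 — 6 statements merged into one kernel-verified Lean document; each statement's English description precedes it below -/
import Mathlib

section
/- Let r ≥ 1, t ≥ 1, and let G be a K_{r+1}-free graph on n vertices (G contains no subgraph isomorphic to the complete graph K_{r+1}). Then the number of subgraphs of G isomorphic to K_t is at most C(r, t) · (n/r)^t, i.e. N(K_t, G) · r^t ≤ C(r, t) · n^t. -/
/-!
Give every vertex a weight `x i ≥ 0` and let `L(x)` be the sum over all `t`-cliques of the product
of the weights of their vertices; for `x ≡ 1` this is the number of `t`-cliques. If two
vertices `u` and `v` of the support of `x` are not adjacent, no clique contains both, so moving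
all the weight of `v` onto `u`, or all the weight of `u` onto `v`, changes `L` by amounts of
opposite signs (in the ratio `x v : x u`); one of the two moves does not decrease `L`, keeps the
total weight, and shrinks the support. Hence it suffices to bound `L` when the support is a
clique, which has at most `r` vertices in a `K_{r+1}`-free graph. There `L(x)` is at most the
`t`-th elementary symmetric polynomial of at most `r` numbers with sum `S`, and Maclaurin's
inequality bounds it by `C(r, t) (S / r) ^ t`.
-/

open Finset

theorem Finset.sum_powersetCard_succ_insert_prod {ι R : Type*} [DecidableEq ι] [CommSemiring R]
    {s : Finset ι} {a : ι} (ha : a ∉ s) (f : ι → R) (j : ℕ) :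
    ∑ T ∈ (insert a s).powersetCard (j + 1), ∏ i ∈ T, f i =
      ∑ T ∈ s.powersetCard (j + 1), ∏ i ∈ T, f i
        + f a * ∑ T ∈ s.powersetCard j, ∏ i ∈ T, f i := by
  have notMem : ∀ {k}, ∀ T ∈ s.powersetCard k, a ∉ T := fun T hT haT =>
    ha ((mem_powersetCard.1 hT).1 haT)
  rw [powersetCard_succ_insert ha, sum_union, sum_image, mul_sum]
  · exact congrArg _ (sum_congr rfl fun T hT => prod_insert (notMem T hT))
  · intro T hT U hU hTU
    rw [← erase_insert (notMem T hT), ← erase_insert (notMem U hU)]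
    exact congrArg (·.erase a) hTU
  · refine disjoint_left.2 fun T hT hT' => ?_
    obtain ⟨U, -, rfl⟩ := mem_image.1 hT'
    exact notMem _ hT (mem_insert_self a U)

section Maclaurin

variable {R : Type*} [Field R] [LinearOrder R] [IsStrictOrderedRing R]

/-- The tangent line of `b ↦ b ^ (j + 1)` at `a` (Bernoulli's inequality), combined with
Pascal's rule and `(j + 1) C(k + 1, j + 1) = (k + 1) C(k, j)`. -/
theorem choose_mul_pow_add_le {k : ℕ} {a b y : R} (ha : 0 ≤ a) (hy : 0 ≤ y)
    (hb : (k + 1) * b = k * a + y) (j : ℕ) :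
    k.choose (j + 1) * a ^ (j + 1) + k.choose j * a ^ j * y
      ≤ (k + 1).choose (j + 1) * b ^ (j + 1) := by
  have hb0 : 0 ≤ b :=
    nonneg_of_mul_nonneg_right (by rw [hb]; positivity) (by positivity : (0 : R) < k + 1)
  have hpascal : ((k + 1).choose (j + 1) : R) = k.choose j + k.choose (j + 1) := by
    exact_mod_cast Nat.choose_succ_succ' k j
  have habs : ((k + 1).choose (j + 1) : R) * (j + 1) = (k + 1) * k.choose j := by
    exact_mod_cast (Nat.add_one_mul_choose_eq k j).symm
  have tangent : a ^ (j + 1) + (j + 1 : ℕ) * a ^ j * (b - a) ≤ b ^ (j + 1) := by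
    simpa using pow_add_mul_le_add_pow ha (by linarith : 0 ≤ 2 * a + (b - a)) (j + 1)
  push_cast at tangent
  calc k.choose (j + 1) * a ^ (j + 1) + k.choose j * a ^ j * y
      = (k + 1).choose (j + 1) * (a ^ (j + 1) + (j + 1) * a ^ j * (b - a)) := by
        linear_combination (-a ^ (j + 1)) * hpascal - a ^ j * (b - a) * habs
          - k.choose j * a ^ j * hb
    _ ≤ _ := by gcongr

/-- Maclaurin's inequality for `#s ≤ r` numbers, padded with zeros to `r` numbers. -/
theorem Finset.sum_powersetCard_prod_le_choose_mul_pow {ι : Type*} [DecidableEq ι] {s : Finset ι}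
    {x : ι → R} (hx : ∀ i ∈ s, 0 ≤ x i) {r : ℕ} (hs : #s ≤ r) (t : ℕ) :
    ∑ T ∈ s.powersetCard t, ∏ i ∈ T, x i ≤ r.choose t * ((∑ i ∈ s, x i) / r) ^ t := by
  induction s using Finset.induction_on generalizing r t with
  | empty =>
    rcases t with _ | j
    · simp
    · rw [powersetCard_eq_empty.2 (by simp)]; simp
  | insert y s hy ih =>
    rw [card_insert_of_notMem hy] at hs
    obtain ⟨k, rfl⟩ : ∃ k, r = k + 1 := ⟨r - 1, by omega⟩
    rcases t with _ | j
    · simp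
    have hxy : 0 ≤ x y := hx y (mem_insert_self y s)
    have hxs : ∀ i ∈ s, 0 ≤ x i := fun i hi => hx i (mem_insert_of_mem hi)
    have hks : #s ≤ k := by omega
    set a := (∑ i ∈ s, x i) / k
    have hka : k * a = ∑ i ∈ s, x i := by
      rcases k.eq_zero_or_pos with rfl | hk
      · simp [card_eq_zero.1 (Nat.le_zero.1 hks)]
      · exact mul_div_cancel₀ _ (by positivity)
    rw [sum_powersetCard_succ_insert_prod hy, sum_insert hy]
    calc ∑ T ∈ s.powersetCard (j + 1), ∏ i ∈ T, x i
          + x y * ∑ T ∈ s.powersetCard j, ∏ i ∈ T, x i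
        ≤ k.choose (j + 1) * a ^ (j + 1) + x y * (k.choose j * a ^ j) := by
          gcongr ?_ + x y * ?_
          exacts [ih hxs hks (j + 1), ih hxs hks j]
      _ = k.choose (j + 1) * a ^ (j + 1) + k.choose j * a ^ j * x y := by ring
      _ ≤ (k + 1).choose (j + 1) * ((x y + ∑ i ∈ s, x i) / ↑(k + 1)) ^ (j + 1) := by
          refine choose_mul_pow_add_le (div_nonneg (sum_nonneg hxs) k.cast_nonneg) hxy ?_ j
          push_cast
          rw [hka, mul_div_cancel₀ _ (by positivity)]
          ring

end Maclaurin

section MoveWeight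

variable {α R : Type*} [DecidableEq α] [CommSemiring R]

def moveWeight (x : α → R) (v u : α) : α → R :=
  Function.update (Function.update x u (x u + x v)) v 0

theorem moveWeight_nonneg [PartialOrder R] [IsOrderedRing R] {x : α → R} (hx : 0 ≤ x)
    (v u : α) : 0 ≤ moveWeight x v u := by
  intro i
  simp only [moveWeight, Function.update_apply, Pi.zero_apply]
  split_ifs
  exacts [le_rfl, add_nonneg (hx u) (hx v), hx i]

theorem moveWeight_eq_zero {x : α → R} {s : Finset α} (hxs : ∀ i ∉ s, x i = 0) {u : α}
    (hu : u ∈ s) (v : α) : ∀ i ∉ s.erase v, moveWeight x v u i = 0 := by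
  intro i hi
  simp only [moveWeight, Function.update_apply]
  split_ifs with hiv hiu
  · rfl
  · exact absurd (hiu ▸ mem_erase.2 ⟨fun h => hiv (hiu.trans h), hu⟩) hi
  · exact hxs i fun his => hi (mem_erase.2 ⟨hiv, his⟩)

theorem sum_moveWeight [Fintype α] {x : α → R} {u v : α} (huv : u ≠ v) :
    ∑ i, moveWeight x v u i = ∑ i, x i := by
  have hu : u ∈ univ \ {v} := by simpa using huv
  rw [moveWeight, sum_update_of_mem (mem_univ v), sum_update_of_mem hu,
    sum_eq_add_sum_sdiff_singleton_of_mem (mem_univ v) x,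
    sum_eq_add_sum_sdiff_singleton_of_mem hu x]
  ring

theorem mul_prod_moveWeight_add_mul_prod_moveWeight {x : α → R} {u v : α} {S : Finset α}
    (hS : ¬(u ∈ S ∧ v ∈ S)) :
    x u * ∏ i ∈ S, moveWeight x v u i + x v * ∏ i ∈ S, moveWeight x u v i
      = (x u + x v) * ∏ i ∈ S, x i := by
  simp only [moveWeight]
  by_cases hu : u ∈ S
  · have hv : v ∉ S := fun hv => hS ⟨hu, hv⟩
    rw [prod_update_of_notMem hv, prod_update_of_mem hu, prod_update_of_mem hu,
      prod_eq_mul_prod_sdiff_singleton_of_mem hu x]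
    ring
  by_cases hv : v ∈ S
  · rw [prod_update_of_notMem hu, prod_update_of_mem hv, prod_update_of_mem hv,
      prod_eq_mul_prod_sdiff_singleton_of_mem hv x]
    ring
  · rw [prod_update_of_notMem hv, prod_update_of_notMem hu, prod_update_of_notMem hu,
      prod_update_of_notMem hv]
    ring

end MoveWeight

namespace SimpleGraph

variable {V : Type*}

theorem IsClique.card_le_of_cliqueFree {G : SimpleGraph V} {s : Finset V}
    (hs : G.IsClique (s : Set V)) {r : ℕ} (hG : G.CliqueFree (r + 1)) : #s ≤ r := by
  by_contra! hr
  exact (IsNClique.not_cliqueFree ⟨hs, rfl⟩) (hG.mono hr)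

variable [Fintype V] [DecidableEq V] (G : SimpleGraph V) [DecidableRel G.Adj]

section CommSemiring

variable {R : Type*} [CommSemiring R]

def weightedCliqueCount (t : ℕ) (x : V → R) : R :=
  ∑ S ∈ G.cliqueFinset t, ∏ i ∈ S, x i

theorem weightedCliqueCount_one (t : ℕ) :
    G.weightedCliqueCount t (1 : V → R) = #(G.cliqueFinset t) := by
  simp [weightedCliqueCount]

end CommSemiring

variable {R : Type*} [Field R] [LinearOrder R] [IsStrictOrderedRing R] {t : ℕ}

theorem weightedCliqueCount_le_sum_powersetCard {x : V → R} (hx : 0 ≤ x) {s : Finset V}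
    (hxs : ∀ i ∉ s, x i = 0) :
    G.weightedCliqueCount t x ≤ ∑ T ∈ s.powersetCard t, ∏ i ∈ T, x i := by
  have hsupp : ∀ S ∈ G.cliqueFinset t, ∏ i ∈ S, x i ≠ 0 → S ⊆ s := fun S _ hS0 i hi =>
    of_not_not fun his => hS0 (prod_eq_zero hi (hxs i his))
  rw [weightedCliqueCount, ← sum_filter_of_ne hsupp]
  refine sum_le_sum_of_subset_of_nonneg (fun S hS => ?_) fun T _ _ =>
    prod_nonneg fun i _ => hx i
  obtain ⟨hS, hSs⟩ := mem_filter.1 hS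
  exact mem_powersetCard.2 ⟨hSs, (mem_cliqueFinset_iff.1 hS).2⟩

theorem weightedCliqueCount_le_max_moveWeight {x : V → R} (hx : 0 ≤ x) {u v : V} (huv : u ≠ v)
    (hadj : ¬G.Adj u v) :
    G.weightedCliqueCount t x ≤
      max (G.weightedCliqueCount t (moveWeight x v u))
        (G.weightedCliqueCount t (moveWeight x u v)) := by
  -- Since no clique contains both `u` and `v`, the weighted count is affine on the segment
  -- joining the two moved weightings, and `x` is the point of it with barycentric weights
  -- `x u`, `x v`.
  have hsplit : x u * G.weightedCliqueCount t (moveWeight x v u)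
      + x v * G.weightedCliqueCount t (moveWeight x u v)
      = (x u + x v) * G.weightedCliqueCount t x := by
    simp only [weightedCliqueCount, mul_sum, ← sum_add_distrib]
    exact sum_congr rfl fun S hS => mul_prod_moveWeight_add_mul_prod_moveWeight
      fun h => hadj ((mem_cliqueFinset_iff.1 hS).1 h.1 h.2 huv)
  set A := G.weightedCliqueCount t (moveWeight x v u)
  set B := G.weightedCliqueCount t (moveWeight x u v)
  rcases (add_nonneg (hx u) (hx v)).eq_or_lt with h0 | hpos
  · obtain ⟨hxu, hxv⟩ := (add_eq_zero_iff_of_nonneg (hx u) (hx v)).1 h0.symm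
    have hx_eq : moveWeight x v u = x := by
      ext i
      simp only [moveWeight, Function.update_apply]
      split_ifs with hiv hiu
      exacts [hiv ▸ hxv.symm, by rw [hiu, hxu, hxv, add_zero], rfl]
    exact hx_eq ▸ le_max_left A B
  · refine le_of_mul_le_mul_left ?_ hpos
    calc (x u + x v) * G.weightedCliqueCount t x = x u * A + x v * B := hsplit.symm
      _ ≤ x u * max A B + x v * max A B := by
          gcongr
          exacts [hx u, le_max_left A B, hx v, le_max_right A B]
      _ = (x u + x v) * max A B := by ring

theorem weightedCliqueCount_le_of_cliqueFree {r : ℕ} (hG : G.CliqueFree (r + 1))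
    {x : V → R} (hx : 0 ≤ x) :
    G.weightedCliqueCount t x ≤ r.choose t * ((∑ i, x i) / r) ^ t := by
  suffices ∀ s : Finset V, ∀ x : V → R, 0 ≤ x → (∀ i ∉ s, x i = 0) →
      G.weightedCliqueCount t x ≤ r.choose t * ((∑ i, x i) / r) ^ t from
    this univ x hx (by simp)
  intro s
  induction s using Finset.strongInduction with
  | H s ih =>
  intro x hx hxs
  by_cases hs : G.IsClique (s : Set V)
  · have hsum : ∑ i ∈ s, x i = ∑ i, x i := sum_subset (subset_univ s) fun i _ hi => hxs i hi
    calc G.weightedCliqueCount t x ≤ ∑ T ∈ s.powersetCard t, ∏ i ∈ T, x i :=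
          G.weightedCliqueCount_le_sum_powersetCard hx hxs
      _ ≤ r.choose t * ((∑ i ∈ s, x i) / r) ^ t :=
          sum_powersetCard_prod_le_choose_mul_pow (fun i _ => hx i)
            (hs.card_le_of_cliqueFree hG) t
      _ = r.choose t * ((∑ i, x i) / r) ^ t := by rw [hsum]
  obtain ⟨u, hu, v, hv, huv, hadj⟩ : ∃ u ∈ s, ∃ v ∈ s, u ≠ v ∧ ¬G.Adj u v := by
    simpa [IsClique, Set.Pairwise] using hs
  refine (G.weightedCliqueCount_le_max_moveWeight hx huv hadj).trans (max_le ?_ ?_)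
  · simpa only [sum_moveWeight huv] using ih (s.erase v) (erase_ssubset hv) _
      (moveWeight_nonneg hx v u) (moveWeight_eq_zero hxs hu v)
  · simpa only [sum_moveWeight huv.symm] using ih (s.erase u) (erase_ssubset hu) _
      (moveWeight_nonneg hx u v) (moveWeight_eq_zero hxs hv u)

end SimpleGraph

theorem stmt_4_general {V : Type*} [Fintype V] [DecidableEq V]
    (G : SimpleGraph V) [DecidableRel G.Adj]
    (r t n : ℕ) (hr : 1 ≤ r) (hn : Fintype.card V = n)
    (hfree : G.CliqueFree (r + 1)) :
    (G.cliqueFinset t).card * r ^ t ≤ r.choose t * n ^ t := by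
  have h := G.weightedCliqueCount_le_of_cliqueFree hfree (t := t) (x := (1 : V → ℚ)) zero_le_one
  simp only [SimpleGraph.weightedCliqueCount_one, Pi.one_apply, sum_const, card_univ, hn,
    nsmul_one] at h
  have hr : (0 : ℚ) < r := by exact_mod_cast hr
  have hℚ : ((G.cliqueFinset t).card : ℚ) * r ^ t ≤ r.choose t * n ^ t :=
    calc ((G.cliqueFinset t).card : ℚ) * r ^ t ≤ r.choose t * (n / r) ^ t * r ^ t := by gcongr
      _ = r.choose t * n ^ t := by rw [div_pow, mul_assoc, div_mul_cancel₀ _ (by positivity)]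
  exact_mod_cast hℚ

theorem stmt_4 {V : Type*} [Fintype V] [DecidableEq V]
    (G : SimpleGraph V) [DecidableRel G.Adj]
    (r t n : ℕ) (hr : 1 ≤ r) (ht : 1 ≤ t) (hn : Fintype.card V = n)
    (hfree : G.CliqueFree (r + 1)) :
    (G.cliqueFinset t).card * r ^ t ≤ r.choose t * n ^ t :=
  stmt_4_general G r t n hr hn hfree
end

section
/- Let t and r be integers with 2 ≤ t ≤ r, and let G be a P_{r+1}-free graph on n vertices (G contains no subgraph isomorphic to the path on r+1 vertices). Then the number of subgraphs of G isomorphic to K_t is at most (n/r) · C(r, t), i.e. r · N(K_t, G) ≤ n · C(r, t); moreover equality holds if and only if r divides n and G is a disjoint union of n/r copies of K_r. -/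
/-!
Everything is proved for the subgraph induced on an arbitrary vertex set `s`, because the
induction passes to neighbourhoods. Counting pairs (vertex, clique through it) gives
`t N(K_t, G[s]) = ∑_{v ∈ s} N(K_{t-1}, G[N(v)])`, and `G[N(v)]` has no path on `r` vertices
(prepend `v`), so by induction on `t` each term is at most `deg v · C(r-1, t-1) / (r-1)`. Summing
leaves the degree sum, and the Erdős–Gallai bound `∑ deg v ≤ (r-1) |s|` for graphs without a path
on `r+1` vertices gives `r N(K_t) ≤ |s| C(r, t)`. Equality forces equality in Erdős–Gallai, whose
extremal graphs are the disjoint unions of copies of `K_r`.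

Erdős–Gallai goes by induction on `|s|`, the case `|s| ≤ r` being trivial. All neighbours of the
ends `u`, `w` of a longest path `x₁ … x_L` lie on it. If `u ~ x_{i+1}` and `w ~ x_i` for some `i`,
the path closes into a cycle through its whole vertex set, which by maximality is then a union of
components, and the problem splits. Otherwise `deg u + deg w ≤ L - 1 ≤ r - 1`, so deleting the end
of smaller degree lowers the degree sum by at most `r - 1`; in the equality case the `K_r`
containing a neighbour of the deleted vertex, together with that vertex, would contain a path on
`r + 1` vertices.
-/

open Finset

namespace List

variable {α : Type*}

lemma exists_isRotated_cons_isChain {R : α → α → Prop} {c : List α}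
    (hc : Cycle.Chain R (c : Cycle α)) {a : α} (ha : a ∈ c) :
    ∃ q, (a :: q) ~r c ∧ (a :: q).IsChain R := by
  obtain ⟨p, q, rfl⟩ := append_of_mem ha
  have hrot : (a :: (q ++ p)) ~r (p ++ a :: q) := by
    simpa using (isRotated_append (l := p) (l' := a :: q)).symm
  refine ⟨q ++ p, hrot, ?_⟩
  rw [← Cycle.coe_eq_coe.2 hrot, Cycle.chain_coe_cons] at hc
  exact hc.infix (IsPrefix.isInfix ⟨[a], by simp⟩)

variable [DecidableEq α] {l : List α} {a x y : α}

lemma idxOf_pos_of_mem_head? (ha : a ∈ l.head?) (hxa : x ≠ a) : 0 < l.idxOf x := by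
  cases l with
  | nil => simp at ha
  | cons b l =>
    obtain rfl : a = b := by simpa using ha.symm
    rw [idxOf_cons_ne _ (Ne.symm hxa)]
    exact Nat.succ_pos _

lemma idxOf_add_one_lt_length_of_mem_getLast? (ha : a ∈ l.getLast?) (hx : x ∈ l) (hxa : x ≠ a) :
    l.idxOf x + 1 < l.length := by
  have hlt := idxOf_lt_length_of_mem hx
  refine lt_of_le_of_ne hlt fun heq => hxa ?_
  rw [getLast?_eq_getElem?, show l.length - 1 = l.idxOf x by omega, getElem?_eq_getElem hlt,
    getElem_idxOf, Option.mem_some_iff] at ha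
  exact ha

lemma exists_eq_append_cons_cons_of_idxOf_eq (hx : x ∈ l) (hxy : l.idxOf x = l.idxOf y + 1) :
    ∃ p q, l = p ++ y :: x :: q := by
  have hx' := idxOf_lt_length_of_mem hx
  refine ⟨l.take (l.idxOf y), l.drop (l.idxOf x + 1), ?_⟩
  conv_lhs => rw [← take_append_drop (l.idxOf y) l, drop_eq_getElem_cons (by omega),
    drop_eq_getElem_cons (hxy ▸ hx'), getElem_idxOf]
  simp only [← hxy, getElem_idxOf]

end List

namespace SimpleGraph

variable {V : Type*} (G : SimpleGraph V)

def IsPathListIn (s : Finset V) (l : List V) : Prop :=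
  l.Nodup ∧ l.IsChain G.Adj ∧ ∀ x ∈ l, x ∈ s

def PathListsBounded (s : Finset V) (m : ℕ) : Prop :=
  ∀ l, G.IsPathListIn s l → l.length ≤ m

def IsLongestPathListIn (s : Finset V) (l : List V) : Prop :=
  G.IsPathListIn s l ∧ ∀ l', G.IsPathListIn s l' → l'.length ≤ l.length

/-- `c` is a union of connected components of `G[s]`. -/
def IsClosedIn (s c : Finset V) : Prop :=
  c ⊆ s ∧ ∀ a ∈ c, ∀ b ∈ s, G.Adj a b → b ∈ c

/-- `G[s]` is a disjoint union of copies of `K_r`. -/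
def IsCliqueUnionIn (s : Finset V) (r : ℕ) : Prop :=
  ∀ v ∈ s, ∃ q, G.IsClosedIn s q ∧ v ∈ q ∧ G.IsNClique r q

variable {G} {s t c q : Finset V} {l : List V} {m r : ℕ}

lemma IsPathListIn.cons (hl : G.IsPathListIn s l) {x : V} (hx : x ∈ s) (hxl : x ∉ l)
    (hadj : ∀ y ∈ l.head?, G.Adj x y) : G.IsPathListIn s (x :: l) :=
  ⟨List.nodup_cons.2 ⟨hxl, hl.1⟩, hl.2.1.cons hadj, by simpa [hx] using hl.2.2⟩

lemma IsPathListIn.reverse (hl : G.IsPathListIn s l) : G.IsPathListIn s l.reverse :=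
  ⟨List.nodup_reverse.2 hl.1, List.isChain_reverse.2 (hl.2.1.imp fun _ _ h => h.symm),
    by simpa using hl.2.2⟩

lemma PathListsBounded.mono (h : G.PathListsBounded s m) (hts : t ⊆ s) :
    G.PathListsBounded t m :=
  fun l hl => h l ⟨hl.1, hl.2.1, fun x hx => hts (hl.2.2 x hx)⟩

lemma PathListsBounded.exists_isLongestPathListIn (h : G.PathListsBounded s m) :
    ∃ l, G.IsLongestPathListIn s l := by
  classical
  have hex : ∃ k, G.PathListsBounded s k := ⟨m, h⟩
  obtain ⟨l, hl, hlen⟩ : ∃ l, G.IsPathListIn s l ∧ Nat.find hex ≤ l.length := by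
    rcases Nat.eq_zero_or_pos (Nat.find hex) with h0 | hpos
    · exact ⟨[], ⟨List.nodup_nil, List.IsChain.nil, by simp⟩, h0.le⟩
    · have := Nat.find_min hex (Nat.sub_lt hpos one_pos)
      simp only [PathListsBounded, not_forall, not_le] at this
      obtain ⟨l, hl, hlen⟩ := this
      exact ⟨l, hl, by omega⟩
  exact ⟨l, hl, fun l' hl' => (Nat.find_spec hex l' hl').trans hlen⟩

lemma IsLongestPathListIn.reverse (hl : G.IsLongestPathListIn s l) :
    G.IsLongestPathListIn s l.reverse :=
  ⟨hl.1.reverse, by simpa using hl.2⟩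

lemma IsLongestPathListIn.ne_nil (hl : G.IsLongestPathListIn s l) (hs : s.Nonempty) : l ≠ [] := by
  obtain ⟨v, hv⟩ := hs
  have := hl.2 [v] ⟨List.nodup_singleton v, List.isChain_singleton v, by simpa using hv⟩
  rintro rfl
  simp at this

lemma IsLongestPathListIn.mem_of_adj_head (hl : G.IsLongestPathListIn s l) {a x : V}
    (ha : a ∈ l.head?) (hx : x ∈ s) (hax : G.Adj a x) : x ∈ l := by
  by_contra hxl
  have := hl.2 _ (hl.1.cons hx hxl fun y hy => by
    rw [Option.mem_def] at ha hy; rw [ha] at hy; cases hy; exact hax.symm)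
  simp at this

lemma IsLongestPathListIn.mem_of_adj_getLast (hl : G.IsLongestPathListIn s l) {a x : V}
    (ha : a ∈ l.getLast?) (hx : x ∈ s) (hax : G.Adj a x) : x ∈ l := by
  simpa using hl.reverse.mem_of_adj_head (by rwa [List.head?_reverse]) hx hax

lemma cycleChain_append_reverse {a b : V} {l₁ l₂ : List V}
    (h : (a :: l₁ ++ b :: l₂).IsChain G.Adj) (hab : G.Adj a b)
    (hlast : ∀ x ∈ (a :: l₁).getLast?, ∀ y ∈ (b :: l₂).getLast?, G.Adj x y) :
    Cycle.Chain G.Adj ↑(a :: l₁ ++ (b :: l₂).reverse) := by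
  have e : a :: (l₁ ++ (b :: l₂).reverse ++ [a]) = (a :: l₁) ++ (a :: b :: l₂).reverse := by simp
  rw [List.cons_append, Cycle.chain_coe_cons, e, List.isChain_append]
  refine ⟨h.infix (List.prefix_append _ _).isInfix, ?_, fun x hx y hy => hlast x hx y ?_⟩
  · rw [List.isChain_reverse, List.isChain_cons_cons]
    exact ⟨hab.symm, (h.infix (List.suffix_append _ _).isInfix).imp fun _ _ h => h.symm⟩
  · rwa [List.head?_reverse, List.getLast?_cons_cons] at hy

lemma IsLongestPathListIn.isClosedIn_toFinset_of_cycle [DecidableEq V]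
    (hl : G.IsLongestPathListIn s l) {c : List V} (hcl : c.Perm l)
    (hc : Cycle.Chain G.Adj (c : Cycle V)) : G.IsClosedIn s l.toFinset := by
  refine ⟨fun x hx => hl.1.2.2 x (List.mem_toFinset.1 hx), fun a ha b hb hab => ?_⟩
  by_contra hbl
  rw [List.mem_toFinset] at ha hbl
  obtain ⟨q, hrot, hq⟩ := List.exists_isRotated_cons_isChain hc (hcl.mem_iff.2 ha)
  have hperm : (a :: q).Perm l := hrot.perm.trans hcl
  have hpath : G.IsPathListIn s (a :: q) :=
    ⟨hperm.nodup_iff.2 hl.1.1, hq, fun x hx => hl.1.2.2 x (hperm.mem_iff.1 hx)⟩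
  have := hl.2 _ (hpath.cons hb (fun h => hbl (hperm.mem_iff.1 h)) (by simpa using hab.symm))
  simp [hperm.length_eq] at this

lemma IsLongestPathListIn.isClosedIn_toFinset_of_cross [DecidableEq V]
    (hl : G.IsLongestPathListIn s l) {u w x y : V} {p q : List V} (hu : u ∈ l.head?)
    (hw : w ∈ l.getLast?) (hsplit : l = p ++ y :: x :: q) (hux : G.Adj u x) (hwy : G.Adj w y) :
    G.IsClosedIn s l.toFinset := by
  obtain ⟨a, l₁, he⟩ := List.exists_cons_of_ne_nil (List.concat_ne_nil y p)
  obtain rfl : l = a :: l₁ ++ x :: q := by rw [hsplit, ← he]; simp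
  obtain rfl : u = a := by simpa using hu.symm
  refine hl.isClosedIn_toFinset_of_cycle ((List.reverse_perm _).append_left _)
    (cycleChain_append_reverse hl.1.2.1 hux fun y' hy' w' hw' => ?_)
  rw [← he, List.getLast?_concat, Option.mem_some_iff] at hy'
  rw [List.getLast?_append_of_ne_nil _ (List.cons_ne_nil x q)] at hw
  obtain rfl := hy'
  obtain rfl : w' = w := Option.mem_unique hw' hw
  exact hwy.symm

lemma pathListsBounded_univ_of_isEmpty_iso [Fintype V] [DecidableEq V]
    (h : ∀ S : G.Subgraph, IsEmpty (S.coe ≃g pathGraph (m + 1))) :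
    G.PathListsBounded univ m := by
  intro l hl
  by_contra! hlong
  have hne : l.take (m + 1) ≠ [] := List.ne_nil_of_length_pos (by simp; omega)
  let w := Walk.ofSupport _ hne (hl.2.1.infix (List.take_prefix _ _).isInfix)
  have hw : w.IsPath := by
    rw [Walk.isPath_def, Walk.support_ofSupport]
    exact hl.1.sublist (List.take_sublist _ _)
  have hlen : w.length = m := by simp [w]; omega
  exact (h w.toSubgraph).false (hlen ▸ hw.pathGraphIsoToSubgraph).symm

lemma IsClosedIn.refl (s : Finset V) : G.IsClosedIn s s :=
  ⟨subset_rfl, fun _ _ _ hb _ => hb⟩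

lemma IsClosedIn.trans (hc : G.IsClosedIn s c) (hq : G.IsClosedIn c q) : G.IsClosedIn s q :=
  ⟨hq.1.trans hc.1, fun a ha b hb hab => hq.2 a ha b (hc.2 a (hq.1 ha) b hb hab) hab⟩

lemma IsClosedIn.sdiff [DecidableEq V] (hc : G.IsClosedIn s c) : G.IsClosedIn s (s \ c) := by
  refine ⟨sdiff_subset, fun a ha b hb hab => mem_sdiff.2 ⟨hb, fun hbc => ?_⟩⟩
  exact (mem_sdiff.1 ha).2 (hc.2 b hbc a (mem_sdiff.1 ha).1 hab.symm)

lemma IsClosedIn.reachable_iff_mem [Fintype V] (hq : G.IsClosedIn univ q)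
    (hcl : G.IsClique (q : Set V)) {v w : V} (hv : v ∈ q) : G.Reachable v w ↔ w ∈ q := by
  constructor
  · rintro ⟨p⟩
    induction p with
    | nil => exact hv
    | cons hadj _ ih => exact ih (hq.2 _ hv _ (mem_univ _) hadj)
  · intro hw
    obtain rfl | hvw := eq_or_ne v w
    · rfl
    · exact (hcl hv hw hvw).reachable

lemma IsCliqueUnionIn.of_isClique (hs : G.IsClique (s : Set V)) : G.IsCliqueUnionIn s #s :=
  fun _ hv => ⟨s, IsClosedIn.refl s, hv, ⟨hs, rfl⟩⟩

lemma IsCliqueUnionIn.of_isClosedIn [DecidableEq V] (hc : G.IsClosedIn s c)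
    (h₁ : G.IsCliqueUnionIn c r) (h₂ : G.IsCliqueUnionIn (s \ c) r) : G.IsCliqueUnionIn s r := by
  intro v hv
  by_cases hvc : v ∈ c
  · obtain ⟨q, hq, h⟩ := h₁ v hvc
    exact ⟨q, hc.trans hq, h⟩
  · obtain ⟨q, hq, h⟩ := h₂ v (mem_sdiff.2 ⟨hv, hvc⟩)
    exact ⟨q, hc.sdiff.trans hq, h⟩

lemma isCliqueUnionIn_univ_iff [Fintype V] :
    G.IsCliqueUnionIn univ r ↔
      (∀ v w, G.Reachable v w → v ≠ w → G.Adj v w) ∧ ∀ v, Nat.card {w | G.Reachable v w} = r := by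
  classical
  constructor
  · intro h
    refine ⟨fun v w hvw hne => ?_, fun v => ?_⟩ <;> obtain ⟨q, hq, hvq, hqc⟩ := h v (mem_univ v)
    · exact hqc.isClique hvq ((hq.reachable_iff_mem hqc.isClique hvq).1 hvw) hne
    · have : {w | G.Reachable v w} = (q : Set V) :=
        Set.ext fun w => hq.reachable_iff_mem hqc.isClique hvq
      rw [this, Nat.card_coe_set_eq, Set.ncard_coe_finset, hqc.card_eq]
  · rintro ⟨hadj, hcard⟩ v -
    refine ⟨univ.filter (G.Reachable v), ⟨subset_univ _, fun a ha b _ hab => ?_⟩, by simp,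
      ⟨fun a ha b hb hab => ?_, by simpa using hcard v⟩⟩
    · simpa using (mem_filter.1 ha).2.trans hab.reachable
    · simp only [coe_filter, mem_univ, true_and, Set.mem_ofPred_eq] at ha hb
      exact hadj a b (ha.symm.trans hb) hab

lemma not_pathListsBounded_of_adj_isNClique {v y : V} (hq : G.IsNClique m q) (hqs : q ⊆ s)
    (hv : v ∈ s) (hvq : v ∉ q) (hy : y ∈ q) (hvy : G.Adj v y) : ¬ G.PathListsBounded s m := by
  classical
  intro h
  have hpath : G.IsPathListIn s (y :: (q.erase y).toList) := by
    have hmem : ∀ x ∈ y :: (q.erase y).toList, x ∈ q := by simp +contextual [hy]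
    have hnd : (y :: (q.erase y).toList).Nodup := by simp [nodup_toList]
    exact ⟨hnd, (hnd.pairwise_of_forall_ne fun a ha b hb hab =>
      hq.isClique (hmem a ha) (hmem b hb) hab).isChain, fun x hx => hqs (hmem x hx)⟩
  have := h _ (hpath.cons hv (fun h => hvq (by simp_all)) (by simpa using hvy))
  simp [card_erase_of_mem hy, hq.card_eq] at this
  omega

variable (G) [DecidableRel G.Adj]

def neighborFinsetIn (s : Finset V) (v : V) : Finset V := {w ∈ s | G.Adj v w}

def degreeSumIn (s : Finset V) : ℕ := ∑ v ∈ s, #(G.neighborFinsetIn s v)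

def cliqueFinsetIn [DecidableEq V] (s : Finset V) (k : ℕ) : Finset (Finset V) :=
  {q ∈ s.powerset | G.IsNClique k q}

variable {G}

@[simp]
lemma mem_neighborFinsetIn {v w : V} : w ∈ G.neighborFinsetIn s v ↔ w ∈ s ∧ G.Adj v w :=
  mem_filter

lemma PathListsBounded.neighborFinsetIn (h : G.PathListsBounded s (m + 1)) {v : V} (hv : v ∈ s) :
    G.PathListsBounded (G.neighborFinsetIn s v) m := by
  intro l hl
  have hs : ∀ x ∈ l, x ∈ s ∧ G.Adj v x := fun x hx => mem_neighborFinsetIn.1 (hl.2.2 x hx)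
  have hl' : G.IsPathListIn s l := ⟨hl.1, hl.2.1, fun x hx => (hs x hx).1⟩
  have := h _ (hl'.cons hv (fun hvl => G.irrefl (hs v hvl).2)
    fun y hy => (hs y (List.mem_of_mem_head? hy)).2)
  simpa using this

lemma IsClosedIn.neighborFinsetIn_eq (hc : G.IsClosedIn s c) {v : V} (hv : v ∈ c) :
    G.neighborFinsetIn c v = G.neighborFinsetIn s v := by
  ext w
  simp only [mem_neighborFinsetIn]
  exact ⟨fun h => ⟨hc.1 h.1, h.2⟩, fun h => ⟨hc.2 v hv w h.1 h.2, h.2⟩⟩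

variable [DecidableEq V] {k : ℕ}

@[simp]
lemma mem_cliqueFinsetIn : q ∈ G.cliqueFinsetIn s k ↔ q ⊆ s ∧ G.IsNClique k q := by
  simp [cliqueFinsetIn]

lemma cliqueFinsetIn_univ [Fintype V] (k : ℕ) : G.cliqueFinsetIn univ k = G.cliqueFinset k := by
  ext q; simp

lemma cliqueFinsetIn_of_isClique (hs : G.IsClique (s : Set V)) (k : ℕ) :
    G.cliqueFinsetIn s k = s.powersetCard k := by
  ext q
  simp only [mem_cliqueFinsetIn, mem_powersetCard, isNClique_iff]
  exact ⟨fun h => ⟨h.1, h.2.2⟩, fun h => ⟨h.1, hs.subset (by exact_mod_cast h.1), h.2⟩⟩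

lemma card_cliqueFinsetIn_one (s : Finset V) : #(G.cliqueFinsetIn s 1) = #s := by
  have : G.cliqueFinsetIn s 1 = s.powersetCard 1 := by
    ext q; simp [card_eq_one]
  rw [this, card_powersetCard, Nat.choose_one_right]

lemma sum_card_filter_mem_cliqueFinsetIn (s : Finset V) (k : ℕ) :
    ∑ v ∈ s, #{q ∈ G.cliqueFinsetIn s k | v ∈ q} = k * #(G.cliqueFinsetIn s k) := by
  simp_rw [card_eq_sum_ones, sum_filter]
  rw [sum_comm, mul_sum, mul_one]
  refine sum_congr rfl fun q hq => ?_
  rw [mem_cliqueFinsetIn] at hq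
  rw [← sum_filter, ← card_eq_sum_ones, filter_mem_eq_inter, inter_eq_right.2 hq.1, hq.2.card_eq]

lemma card_filter_mem_cliqueFinsetIn_succ {v : V} (hv : v ∈ s) (k : ℕ) :
    #{q ∈ G.cliqueFinsetIn s (k + 1) | v ∈ q} =
      #(G.cliqueFinsetIn (G.neighborFinsetIn s v) k) := by
  refine card_nbij' (·.erase v) (insert v) (fun q hq => ?_) (fun q hq => ?_)
    (fun q hq => insert_erase (mem_filter.1 hq).2) (fun q hq => erase_insert fun h => ?_)
  · simp only [coe_filter, mem_cliqueFinsetIn, mem_coe] at hq ⊢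
    obtain ⟨⟨hqs, hq⟩, hvq⟩ := hq
    refine ⟨fun x hx => ?_, hq.erase_of_mem hvq⟩
    obtain ⟨hxv, hxq⟩ := mem_erase.1 hx
    exact mem_neighborFinsetIn.2 ⟨hqs hxq, hq.isClique hvq hxq (Ne.symm hxv)⟩
  · simp only [coe_filter, mem_cliqueFinsetIn, mem_coe] at hq ⊢
    refine ⟨⟨insert_subset hv fun x hx => (mem_neighborFinsetIn.1 (hq.1 hx)).1,
      hq.2.insert fun x hx => (mem_neighborFinsetIn.1 (hq.1 hx)).2⟩, mem_insert_self v q⟩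
  · exact G.irrefl (mem_neighborFinsetIn.1 ((mem_cliqueFinsetIn.1 hq).1 h)).2

lemma mul_card_cliqueFinsetIn_succ (s : Finset V) (k : ℕ) :
    (k + 1) * #(G.cliqueFinsetIn s (k + 1)) =
      ∑ v ∈ s, #(G.cliqueFinsetIn (G.neighborFinsetIn s v) k) := by
  rw [← sum_card_filter_mem_cliqueFinsetIn]
  exact sum_congr rfl fun v hv => card_filter_mem_cliqueFinsetIn_succ hv k

lemma neighborFinsetIn_subset_erase (s : Finset V) (v : V) :
    G.neighborFinsetIn s v ⊆ s.erase v :=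
  fun _ hw => mem_erase.2 ⟨(G.ne_of_adj (mem_neighborFinsetIn.1 hw).2).symm,
    (mem_neighborFinsetIn.1 hw).1⟩

lemma IsClosedIn.neighborFinsetIn_eq_erase (hq : G.IsClosedIn s q) (hcl : G.IsClique (q : Set V))
    {v : V} (hv : v ∈ q) : G.neighborFinsetIn s v = q.erase v := by
  rw [← hq.neighborFinsetIn_eq hv]
  refine (neighborFinsetIn_subset_erase q v).antisymm fun w hw => ?_
  obtain ⟨hwv, hwq⟩ := mem_erase.1 hw
  exact mem_neighborFinsetIn.2 ⟨hwq, hcl hv hwq (Ne.symm hwv)⟩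

lemma degreeSumIn_eq_add_of_isClosedIn (hc : G.IsClosedIn s c) :
    G.degreeSumIn s = G.degreeSumIn c + G.degreeSumIn (s \ c) := by
  rw [degreeSumIn, ← sum_sdiff hc.1, add_comm, degreeSumIn, degreeSumIn]
  congr 1 <;> refine sum_congr rfl fun v hv => ?_
  · rw [hc.neighborFinsetIn_eq hv]
  · rw [hc.sdiff.neighborFinsetIn_eq hv]

lemma degreeSumIn_erase {v : V} (hv : v ∈ s) :
    G.degreeSumIn s = G.degreeSumIn (s.erase v) + 2 * #(G.neighborFinsetIn s v) := by
  have hsplit : ∀ x ∈ s, #(G.neighborFinsetIn s x) =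
      #(G.neighborFinsetIn (s.erase v) x) + if G.Adj x v then 1 else 0 := by
    intro x _
    have he : G.neighborFinsetIn (s.erase v) x = (G.neighborFinsetIn s x).erase v :=
      filter_erase _ _ _
    split_ifs with h
    · rw [he, card_erase_add_one (mem_neighborFinsetIn.2 ⟨hv, h⟩)]
    · rw [he, erase_eq_of_notMem (by simp [h]), add_zero]
  have hself : G.neighborFinsetIn (s.erase v) v = G.neighborFinsetIn s v := by
    ext w
    simp only [mem_neighborFinsetIn, mem_erase]
    exact ⟨fun h => ⟨h.1.2, h.2⟩, fun h => ⟨⟨(G.ne_of_adj h.2).symm, h.1⟩, h.2⟩⟩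
  have hcount : ∑ x ∈ s, (if G.Adj x v then 1 else 0) = #(G.neighborFinsetIn s v) := by
    rw [← card_filter]
    simp_rw [G.adj_comm _ v]
    rfl
  rw [degreeSumIn, sum_congr rfl hsplit, sum_add_distrib, hcount, ← add_sum_erase _ _ hv, hself,
    degreeSumIn]
  ring

lemma IsLongestPathListIn.card_neighborFinsetIn_add_card_lt (hl : G.IsLongestPathListIn s l)
    {u w : V} (hu : u ∈ l.head?) (hw : w ∈ l.getLast?)
    (hcross : ∀ p y x q, l = p ++ y :: x :: q → G.Adj u x → ¬ G.Adj w y) :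
    #(G.neighborFinsetIn s u) + #(G.neighborFinsetIn s w) < l.length := by
  have hmemu : ∀ x ∈ G.neighborFinsetIn s u, x ∈ l := fun x hx =>
    hl.mem_of_adj_head hu (mem_neighborFinsetIn.1 hx).1 (mem_neighborFinsetIn.1 hx).2
  have hmemw : ∀ x ∈ G.neighborFinsetIn s w, x ∈ l := fun x hx =>
    hl.mem_of_adj_getLast hw (mem_neighborFinsetIn.1 hx).1 (mem_neighborFinsetIn.1 hx).2
  set A := (G.neighborFinsetIn s u).image l.idxOf
  set B := (G.neighborFinsetIn s w).image (l.idxOf · + 1)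
  have hA : #A = #(G.neighborFinsetIn s u) :=
    card_image_of_injOn fun x hx _ _ h => (List.idxOf_inj (hmemu x hx)).1 h
  have hB : #B = #(G.neighborFinsetIn s w) :=
    card_image_of_injOn fun x hx _ _ h => (List.idxOf_inj (hmemw x hx)).1 (Nat.add_right_cancel h)
  have hAB : A ∪ B ⊆ Ico 1 l.length := by
    refine union_subset (fun i hi => ?_) fun i hi => ?_ <;>
      obtain ⟨x, hx, rfl⟩ := mem_image.1 hi <;> rw [mem_Ico]
    · exact ⟨List.idxOf_pos_of_mem_head? hu (G.ne_of_adj (mem_neighborFinsetIn.1 hx).2).symm,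
        List.idxOf_lt_length_of_mem (hmemu x hx)⟩
    · exact ⟨Nat.le_add_left 1 _, List.idxOf_add_one_lt_length_of_mem_getLast? hw (hmemw x hx)
        (G.ne_of_adj (mem_neighborFinsetIn.1 hx).2).symm⟩
  have hdisj : Disjoint A B := by
    refine Finset.disjoint_left.2 fun i hiA hiB => ?_
    obtain ⟨x, hx, rfl⟩ := mem_image.1 hiA
    obtain ⟨y, hy, hxy⟩ := mem_image.1 hiB
    obtain ⟨p, q, hpq⟩ := List.exists_eq_append_cons_cons_of_idxOf_eq (hmemu x hx) hxy.symm
    exact hcross p y x q hpq (mem_neighborFinsetIn.1 hx).2 (mem_neighborFinsetIn.1 hy).2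
  have hL : 1 ≤ l.length := List.length_pos_of_mem (List.mem_of_mem_head? hu)
  have := card_le_card hAB
  rw [card_union_of_disjoint hdisj, Nat.card_Ico, hA, hB] at this
  omega

lemma PathListsBounded.exists_isClosedIn_or_exists_two_mul_card_le
    (h : G.PathListsBounded s (r + 1)) (hs : s.Nonempty) :
    (∃ c, G.IsClosedIn s c ∧ c.Nonempty ∧ #c ≤ r + 1) ∨
      ∃ v ∈ s, 2 * #(G.neighborFinsetIn s v) ≤ r := by
  obtain ⟨l, hl⟩ := h.exists_isLongestPathListIn
  have hne := hl.ne_nil hs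
  have hu := List.head?_eq_some_head hne
  have hw := List.getLast?_eq_some_getLast hne
  set u := l.head hne
  set w := l.getLast hne
  by_cases hcross : ∃ p y x q, l = p ++ y :: x :: q ∧ G.Adj u x ∧ G.Adj w y
  · obtain ⟨p, y, x, q, hsplit, hux, hwy⟩ := hcross
    refine .inl ⟨_, hl.isClosedIn_toFinset_of_cross hu hw hsplit hux hwy,
      ⟨u, List.mem_toFinset.2 (List.head_mem hne)⟩, ?_⟩
    rw [List.toFinset_card_of_nodup hl.1.1]
    exact h l hl.1
  · simp only [not_exists, not_and] at hcross
    have hlt := hl.card_neighborFinsetIn_add_card_lt hu hw hcross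
    have hlen := h l hl.1
    rcases le_total #(G.neighborFinsetIn s u) #(G.neighborFinsetIn s w) with hle | hle
    · exact .inr ⟨u, hl.1.2.2 u (List.head_mem hne), by omega⟩
    · exact .inr ⟨w, hl.1.2.2 w (List.getLast_mem hne), by omega⟩

lemma degreeSumIn_le_and_isCliqueUnionIn_of_card_le (hs : #s ≤ r + 1) :
    G.degreeSumIn s ≤ #s * r ∧ (G.degreeSumIn s = #s * r → G.IsCliqueUnionIn s (r + 1)) := by
  have hdeg : ∀ v ∈ s, #(G.neighborFinsetIn s v) ≤ #s - 1 := fun v hv =>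
    (card_le_card (neighborFinsetIn_subset_erase s v)).trans (card_erase_of_mem hv).le
  have hsum : G.degreeSumIn s ≤ #s * (#s - 1) := by
    simpa [degreeSumIn] using sum_le_card_nsmul s _ _ hdeg
  refine ⟨hsum.trans (Nat.mul_le_mul_left _ (by omega)), fun heq => ?_⟩
  rcases s.eq_empty_or_nonempty with rfl | hne
  · simp [IsCliqueUnionIn]
  have hpos := hne.card_pos
  have hcard : #s = r + 1 := by
    have : #s * r ≤ #s * (#s - 1) := heq ▸ hsum
    have := Nat.le_of_mul_le_mul_left this hpos
    omega
  have hfull : ∀ v ∈ s, #(G.neighborFinsetIn s v) = #s - 1 := by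
    refine (sum_eq_sum_iff_of_le hdeg).1 ?_
    rw [sum_const, smul_eq_mul, ← degreeSumIn, heq, hcard]
    rfl
  have hclique : G.IsClique (s : Set V) := by
    intro a ha b hb hab
    have := eq_of_subset_of_card_le (neighborFinsetIn_subset_erase s a)
      (by rw [card_erase_of_mem ha, hfull a ha])
    exact (mem_neighborFinsetIn.1 (this ▸ mem_erase.2 ⟨Ne.symm hab, hb⟩)).2
  exact hcard ▸ IsCliqueUnionIn.of_isClique hclique

theorem degreeSumIn_le_and_isCliqueUnionIn (hr : 1 ≤ r) (h : G.PathListsBounded s (r + 1)) :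
    G.degreeSumIn s ≤ #s * r ∧ (G.degreeSumIn s = #s * r → G.IsCliqueUnionIn s (r + 1)) := by
  induction hn : #s using Nat.strong_induction_on generalizing s with
  | _ n ih =>
  subst hn
  by_cases hsmall : #s ≤ r + 1
  · exact degreeSumIn_le_and_isCliqueUnionIn_of_card_le hsmall
  have hs : s.Nonempty := nonempty_of_ne_empty (by rintro rfl; simp at hsmall)
  rcases h.exists_isClosedIn_or_exists_two_mul_card_le hs with ⟨c, hc, hcne, hcard⟩ | ⟨v, hv, hdeg⟩
  · have hsplit : #(s \ c) + #c = #s := card_sdiff_add_card_eq_card hc.1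
    have hcpos := hcne.card_pos
    obtain ⟨h₁, e₁⟩ := ih #c (by omega) (h.mono hc.1) rfl
    obtain ⟨h₂, e₂⟩ := ih #(s \ c) (by omega) (h.mono sdiff_subset) rfl
    rw [degreeSumIn_eq_add_of_isClosedIn hc, ← hsplit, add_mul]
    exact ⟨by linarith, fun heq => (e₁ (by linarith)).of_isClosedIn hc (e₂ (by linarith))⟩
  · have hcard : #(s.erase v) + 1 = #s := card_erase_add_one hv
    obtain ⟨h', e'⟩ := ih _ (by omega) (h.mono (erase_subset v s)) rfl
    rw [degreeSumIn_erase hv, ← hcard, add_mul, one_mul]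
    refine ⟨by linarith, fun heq => ?_⟩
    obtain ⟨y, hy⟩ : (G.neighborFinsetIn s v).Nonempty := card_pos.1 (by omega)
    obtain ⟨hys, hvy⟩ := mem_neighborFinsetIn.1 hy
    obtain ⟨q, hq, hyq, hqc⟩ := e' (by linarith) y (mem_erase.2 ⟨(G.ne_of_adj hvy).symm, hys⟩)
    exact (not_pathListsBounded_of_adj_isNClique hqc (hq.1.trans (erase_subset v s)) hv
      (fun hvq => by simpa using hq.1 hvq) hyq hvy h).elim

lemma mul_mul_card_cliqueFinsetIn_le_degreeSumIn_mul (hnbhd : ∀ v ∈ s,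
    (r + 1) * #(G.cliqueFinsetIn (G.neighborFinsetIn s v) (k + 1)) ≤
      #(G.neighborFinsetIn s v) * (r + 1).choose (k + 1)) :
    (r + 1) * ((k + 2) * #(G.cliqueFinsetIn s (k + 2))) ≤
      G.degreeSumIn s * (r + 1).choose (k + 1) := by
  rw [mul_card_cliqueFinsetIn_succ, mul_sum, degreeSumIn, sum_mul]
  exact sum_le_sum hnbhd

theorem card_cliqueFinsetIn_le (hk : k ≤ r) (h : G.PathListsBounded s (r + 1)) :
    (r + 1) * #(G.cliqueFinsetIn s (k + 1)) ≤ #s * (r + 1).choose (k + 1) := by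
  induction k generalizing r s with
  | zero => simp [card_cliqueFinsetIn_one, mul_comm]
  | succ k ih =>
    obtain ⟨r, rfl⟩ : ∃ r', r = r' + 1 := ⟨r - 1, by omega⟩
    have hlocal := mul_mul_card_cliqueFinsetIn_le_degreeSumIn_mul fun v hv =>
      ih (by omega) (h.neighborFinsetIn hv)
    have hdeg := (degreeSumIn_le_and_isCliqueUnionIn (Nat.le_add_left 1 r) h).1
    have hchoose := Nat.add_one_mul_choose_eq (r + 1) (k + 1)
    have hstep : (k + 2) * #(G.cliqueFinsetIn s (k + 2)) ≤ #s * (r + 1).choose (k + 1) := by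
      refine Nat.le_of_mul_le_mul_left ?_ (Nat.succ_pos r)
      calc _ ≤ G.degreeSumIn s * (r + 1).choose (k + 1) := hlocal
        _ ≤ #s * (r + 1) * (r + 1).choose (k + 1) := Nat.mul_le_mul_right _ hdeg
        _ = (r + 1) * (#s * (r + 1).choose (k + 1)) := by ring
    refine Nat.le_of_mul_le_mul_left ?_ (Nat.succ_pos (k + 1))
    calc (k + 2) * ((r + 2) * #(G.cliqueFinsetIn s (k + 2)))
        = (r + 2) * ((k + 2) * #(G.cliqueFinsetIn s (k + 2))) := by ring
      _ ≤ (r + 2) * (#s * (r + 1).choose (k + 1)) := Nat.mul_le_mul_left _ hstep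
      _ = (k + 2) * (#s * (r + 2).choose (k + 2)) := by rw [mul_left_comm, hchoose]; ring

lemma degreeSumIn_eq_of_card_cliqueFinsetIn_eq (h : G.PathListsBounded s (r + 2)) (hk : k ≤ r)
    (heq : (k + 2) * #(G.cliqueFinsetIn s (k + 2)) = #s * (r + 1).choose (k + 1)) :
    G.degreeSumIn s = #s * (r + 1) := by
  have hlocal := mul_mul_card_cliqueFinsetIn_le_degreeSumIn_mul fun v hv =>
    card_cliqueFinsetIn_le hk (h.neighborFinsetIn hv)
  have hdeg := (degreeSumIn_le_and_isCliqueUnionIn (Nat.le_add_left 1 r) h).1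
  refine hdeg.antisymm (Nat.le_of_mul_le_mul_right ?_ (Nat.choose_pos (by omega : k + 1 ≤ r + 1)))
  calc #s * (r + 1) * (r + 1).choose (k + 1) = _ := by rw [heq]; ring
    _ ≤ _ := hlocal

lemma IsCliqueUnionIn.mul_card_cliqueFinsetIn (h : G.IsCliqueUnionIn s (r + 1)) (k : ℕ) :
    (k + 1) * #(G.cliqueFinsetIn s (k + 1)) = #s * r.choose k := by
  rw [mul_card_cliqueFinsetIn_succ, ← smul_eq_mul, ← sum_const]
  refine sum_congr rfl fun v hv => ?_
  obtain ⟨q, hq, hvq, hqc⟩ := h v hv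
  rw [hq.neighborFinsetIn_eq_erase hqc.isClique hvq,
    cliqueFinsetIn_of_isClique (hqc.isClique.subset (by simp)), card_powersetCard,
    card_erase_of_mem hvq, hqc.card_eq, Nat.add_sub_cancel]

lemma IsCliqueUnionIn.dvd_card (h : G.IsCliqueUnionIn s (r + 1)) : r + 1 ∣ #s :=
  ⟨#(G.cliqueFinsetIn s (r + 1)), by simpa using (h.mul_card_cliqueFinsetIn r).symm⟩

end SimpleGraph

theorem stmt_6 {V : Type*} [Fintype V] [DecidableEq V]
    (G : SimpleGraph V) [DecidableRel G.Adj]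
    (t r n : ℕ) (ht : 2 ≤ t) (htr : t ≤ r) (hn : Fintype.card V = n)
    (hfree : ∀ S : G.Subgraph, IsEmpty (S.coe ≃g SimpleGraph.pathGraph (r + 1))) :
    r * (G.cliqueFinset t).card ≤ n * r.choose t ∧
    (r * (G.cliqueFinset t).card = n * r.choose t ↔
      r ∣ n ∧ (∀ v w : V, G.Reachable v w → v ≠ w → G.Adj v w) ∧
        ∀ v : V, Nat.card {w : V | G.Reachable v w} = r) := by
  subst hn
  obtain ⟨r, rfl⟩ : ∃ r', r = r' + 2 := ⟨r - 2, by omega⟩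
  obtain ⟨k, rfl⟩ : ∃ k', t = k' + 2 := ⟨t - 2, by omega⟩
  have hpath : G.PathListsBounded univ (r + 2) :=
    SimpleGraph.pathListsBounded_univ_of_isEmpty_iso hfree
  have hscale : ∀ N, (r + 2) * N = #(univ : Finset V) * (r + 2).choose (k + 2) ↔
      (k + 2) * N = #(univ : Finset V) * (r + 1).choose (k + 1) := by
    intro N
    have hchoose := Nat.add_one_mul_choose_eq (r + 1) (k + 1)
    constructor <;> intro h
    · refine Nat.eq_of_mul_eq_mul_left (by omega : 0 < r + 2) ?_
      linear_combination (k + 2) * h - #(univ : Finset V) * hchoose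
    · refine Nat.eq_of_mul_eq_mul_left (by omega : 0 < k + 2) ?_
      linear_combination (r + 2) * h + #(univ : Finset V) * hchoose
  rw [← SimpleGraph.cliqueFinsetIn_univ, ← card_univ, hscale,
    ← SimpleGraph.isCliqueUnionIn_univ_iff]
  refine ⟨SimpleGraph.card_cliqueFinsetIn_le (by omega : k + 1 ≤ r + 1) hpath, fun heq => ?_,
    fun h => h.2.mul_card_cliqueFinsetIn (k + 1)⟩
  have hunion := (SimpleGraph.degreeSumIn_le_and_isCliqueUnionIn (by omega) hpath).2
    (SimpleGraph.degreeSumIn_eq_of_card_cliqueFinsetIn_eq hpath (by omega) heq)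
  exact ⟨hunion.dvd_card, hunion⟩
end

section
/- Let H be a graph on t vertices with dom(H) ≥ 1, let 1 ≤ u ≤ dom(H), and let G be any graph. For each subgraph T of G isomorphic to H, define θ_G(T) = max{ d_G(v) : v is a dominating vertex of T }, and define s^u_G(T) = 1 / C(θ_G(T) - u + 1, t - u). Then θ_G(T) ≥ t-1 for every such T (so s^u_G(T) is well-defined), and the sum of s^u_G(T) over all subgraphs T of G isomorphic to H is at most ( N(H↓u, K_{t-u}) / C(dom(H), u) ) · N(K_u, G). -/
/-!
Every `u`-set of dominating vertices of a copy `T` of `H` is a `u`-clique `K` of `G`, and each copy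
has exactly `dom(H)` dominating vertices, so `C(dom H, u) · Σ_T s(T)` is a sum over `u`-cliques `K`
of the weights of the copies in which `K` is dominating. Such a copy consists of `K` together with a
`(t - u)`-subset `W` of the common neighbourhood `A` of `K`, and it is determined by its edges
inside `W`, which form a copy of `H↓u` on `W`; so there are at most `N(H↓u, K_{t-u}) · C(|A|, t - u)`
of them. On the other hand a vertex of `K` has degree at least `|A| + u - 1`, so each of these
copies has weight at most `1 / C(|A|, t - u)`.
-/

/-- `N(H, G)`: the number of subgraphs of `G` isomorphic to `H`. -/
noncomputable def copyCount {α β : Type*} (H : SimpleGraph α) (G : SimpleGraph β) : ℕ :=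
  Nat.card {T : G.Subgraph // Nonempty (T.coe ≃g H)}

/-- A dominating vertex of a graph: one adjacent to every other vertex. -/
def IsDomVert {α : Type*} (H : SimpleGraph α) (v : α) : Prop :=
  ∀ w : α, w ≠ v → H.Adj v w

section

open Finset

variable {α β V : Type*}

theorem Finset.exists_fin_embedding_range_eq {W : Finset V} {n : ℕ} (hW : #W = n) :
    ∃ e : Fin n ↪ V, Set.range e = W := by
  subst hW
  refine ⟨⟨Subtype.val ∘ W.equivFin.symm, Subtype.val_injective.comp W.equivFin.symm.injective⟩,
    ?_⟩
  rw [Function.Embedding.coeFn_mk, Set.range_comp, W.equivFin.symm.range_eq_univ, Set.image_univ,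
    Subtype.range_coe]

theorem IsDomVert.adj_iff {H : SimpleGraph α} {v w : α} (h : IsDomVert H v) :
    H.Adj v w ↔ w ≠ v :=
  ⟨fun hvw => hvw.ne', h w⟩

namespace SimpleGraph

theorem Iso.isDomVert_iff {A : SimpleGraph α} {B : SimpleGraph β} (φ : A ≃g B) {x : α} :
    IsDomVert B (φ x) ↔ IsDomVert A x := by
  refine ⟨fun h w hw => φ.map_adj_iff.mp (h _ (φ.injective.ne hw)), fun h w hw => ?_⟩
  have hne : φ.symm w ≠ x := fun hwx => hw (by rw [← hwx, φ.apply_symm_apply])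
  simpa using φ.map_adj_iff.mpr (h _ hne)

/-- If `σ x ≠ x` then `σ (σ x) ≠ σ x` too, so both `x` and `σ x` are dominating, and adjacency to a
dominating vertex only depends on equality, which `σ` preserves. -/
def Iso.ofPermOfIsDomVert (H : SimpleGraph α) (σ : Equiv.Perm α)
    (hσ : ∀ x, σ x ≠ x → IsDomVert H x) : H ≃g H where
  toEquiv := σ
  map_rel_iff' {a b} := by
    have hσ' : ∀ x, σ x ≠ x → IsDomVert H (σ x) := fun x hx =>
      hσ _ fun h => hx (σ.injective h)
    change H.Adj (σ a) (σ b) ↔ H.Adj a b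
    by_cases ha : σ a = a
    · by_cases hb : σ b = b
      · rw [ha, hb]
      · rw [H.adj_comm, (hσ' b hb).adj_iff, H.adj_comm, (hσ b hb).adj_iff, σ.injective.ne_iff]
    · rw [(hσ' a ha).adj_iff, (hσ a ha).adj_iff, σ.injective.ne_iff]

theorem exists_iso_preimage_eq_of_isDomVert [Finite α] {H : SimpleGraph α} {S U : Set α}
    (hS : ∀ x ∈ S, IsDomVert H x) (hU : ∀ x ∈ U, IsDomVert H x)
    (hSU : Nat.card S = Nat.card U) : ∃ σ : H ≃g H, σ ⁻¹' U = S := by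
  classical
  have hcard : Nat.card {d : Subtype (IsDomVert H) // ↑d ∈ S} =
      Nat.card {d : Subtype (IsDomVert H) // ↑d ∈ U} := by
    rwa [Nat.card_congr (Equiv.subtypeSubtypeEquivSubtype (hS _)),
      Nat.card_congr (Equiv.subtypeSubtypeEquivSubtype (hU _))]
  obtain ⟨e⟩ := Finite.card_eq.mp hcard
  let σ := Equiv.Perm.ofSubtype e.extendSubtype
  have hfix : ∀ x, σ x ≠ x → IsDomVert H x := fun x hx =>
    by_contra fun h => hx (Equiv.Perm.ofSubtype_apply_of_not_mem _ h)
  refine ⟨Iso.ofPermOfIsDomVert H σ hfix, Set.ext fun x => ?_⟩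
  change σ x ∈ U ↔ x ∈ S
  by_cases hx : IsDomVert H x
  · rw [Equiv.Perm.ofSubtype_apply_of_mem _ hx]
    by_cases hxS : x ∈ S
    · simpa [hxS] using e.extendSubtype_mem ⟨x, hx⟩ hxS
    · simpa [hxS] using e.extendSubtype_not_mem ⟨x, hx⟩ hxS
  · rw [Equiv.Perm.ofSubtype_apply_of_not_mem _ hx]
    exact iff_of_false (fun h => hx (hU x h)) (fun h => hx (hS x h))

/-- An automorphism of `B` permuting its dominating vertices moves `φ '' S` onto `U`. -/
theorem Iso.nonempty_induce_compl [Finite β] {A : SimpleGraph α} {B : SimpleGraph β}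
    (φ : A ≃g B) {S : Set α} {U : Set β} (hS : ∀ x ∈ S, IsDomVert A x)
    (hU : ∀ y ∈ U, IsDomVert B y) (hSU : Nat.card S = Nat.card U) :
    Nonempty (A.induce Sᶜ ≃g B.induce Uᶜ) := by
  obtain ⟨σ, hσ⟩ := exists_iso_preimage_eq_of_isDomVert (S := φ '' S) (U := U)
    (by rintro _ ⟨x, hx, rfl⟩; exact φ.isDomVert_iff.mpr (hS x hx)) hU
    (by rw [Nat.card_image_of_injective φ.injective, hSU])
  have hpre : (σ.comp φ) ⁻¹' Uᶜ = Sᶜ := by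
    rw [Set.preimage_compl, show ⇑(σ.comp φ) = σ ∘ φ from rfl, Set.preimage_comp, hσ,
      Set.preimage_image_eq _ φ.injective]
  exact ⟨(σ.comp φ).induce (hpre ▸ (σ.comp φ).bijective.bijOn_preimage)⟩

variable {G : SimpleGraph V} [Fintype V]

def commonNeighborFinset (G : SimpleGraph V) [DecidableRel G.Adj] (K : Finset V) : Finset V :=
  {w | ∀ v ∈ K, G.Adj v w}

open scoped Classical in
noncomputable def copyFinset (G : SimpleGraph V) (H : SimpleGraph α) : Finset G.Subgraph :=
  {T | Nonempty (T.coe ≃g H)}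

theorem mem_copyFinset {H : SimpleGraph α} {T : G.Subgraph} :
    T ∈ G.copyFinset H ↔ Nonempty (T.coe ≃g H) := by
  simp [copyFinset]

theorem finsum_mem_copies_eq_sum_copyFinset {H : SimpleGraph α} {M : Type*} [AddCommMonoid M]
    (f : G.Subgraph → M) :
    ∑ᶠ T ∈ {T : G.Subgraph | Nonempty (T.coe ≃g H)}, f T = ∑ T ∈ G.copyFinset H, f T := by
  have hcopies : {T : G.Subgraph | Nonempty (T.coe ≃g H)} = G.copyFinset H := by
    ext T
    exact mem_copyFinset.symm
  rw [hcopies, finsum_mem_coe_finset]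

variable [DecidableRel G.Adj]

theorem mem_commonNeighborFinset {K : Finset V} {w : V} :
    w ∈ G.commonNeighborFinset K ↔ ∀ v ∈ K, G.Adj v w := by
  simp [commonNeighborFinset]

theorem card_commonNeighborFinset_add_le_degree {K : Finset V} (hK : G.IsClique (K : Set V))
    {v : V} (hv : v ∈ K) : #(G.commonNeighborFinset K) + (#K - 1) ≤ G.degree v := by
  classical
  have hdisj : Disjoint (G.commonNeighborFinset K) (K.erase v) :=
    Finset.disjoint_left.mpr fun w hw hwK =>
      G.irrefl (mem_commonNeighborFinset.mp hw w (mem_of_mem_erase hwK))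
  have hsub : G.commonNeighborFinset K ∪ K.erase v ⊆ G.neighborFinset v := by
    intro w hw
    rw [mem_neighborFinset]
    rcases mem_union.mp hw with hw | hw
    · exact mem_commonNeighborFinset.mp hw v hv
    · exact hK hv (mem_of_mem_erase hw) (ne_of_mem_erase hw).symm
  rw [← card_erase_of_mem hv, ← card_union_of_disjoint hdisj, ← card_neighborFinset_eq_degree]
  exact card_le_card hsub

end SimpleGraph

namespace SimpleGraph.Subgraph

variable {G : SimpleGraph V}

theorem isDomVert_coe_iff {T : G.Subgraph} {v : V} (hv : v ∈ T.verts) :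
    IsDomVert T.coe ⟨v, hv⟩ ↔ ∀ w ∈ T.verts, w ≠ v → T.Adj v w :=
  ⟨fun h w hw hne => h ⟨w, hw⟩ fun e => hne (congrArg Subtype.val e),
    fun h w hne => h w w.2 fun e => hne (Subtype.ext e)⟩

theorem ncard_verts_of_iso {H : SimpleGraph α} {T : G.Subgraph} (φ : T.coe ≃g H) :
    T.verts.ncard = Nat.card α := by
  rw [← Nat.card_coe_set_eq, Nat.card_congr φ.toEquiv]

def comapTop (T : G.Subgraph) (e : β ↪ V) : (⊤ : SimpleGraph β).Subgraph where
  verts := e ⁻¹' T.verts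
  Adj a b := T.Adj (e a) (e b)
  adj_sub h := (SimpleGraph.top_adj _ _).mpr (ne_of_apply_ne e (T.adj_sub h).ne)
  edge_vert h := T.edge_vert h
  symm := ⟨fun _ _ h => T.adj_symm h⟩

noncomputable def comapTopIso (T : G.Subgraph) (e : β ↪ V) :
    (T.comapTop e).coe ≃g T.coe.induce {x | ↑x ∈ Set.range e} where
  toEquiv := Equiv.ofBijective (fun a => ⟨⟨e a, a.2⟩, a, rfl⟩)
    ⟨fun a b h => Subtype.ext (e.injective (congrArg (fun x => (x.1 : V)) h)),
      fun ⟨⟨_, hv⟩, a, ha⟩ => ⟨⟨a, show e a ∈ T.verts by rw [ha]; exact hv⟩,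
        Subtype.ext (Subtype.ext ha)⟩⟩
  map_rel_iff' := Iff.rfl

variable [Fintype V]

open scoped Classical in
noncomputable def domFinset (T : G.Subgraph) : Finset V :=
  {v | v ∈ T.verts ∧ ∀ w ∈ T.verts, w ≠ v → T.Adj v w}

theorem mem_domFinset {T : G.Subgraph} {v : V} :
    v ∈ T.domFinset ↔ v ∈ T.verts ∧ ∀ w ∈ T.verts, w ≠ v → T.Adj v w := by
  simp [domFinset]

theorem mem_domFinset_iff_isDomVert {T : G.Subgraph} {v : V} :
    v ∈ T.domFinset ↔ ∃ hv : v ∈ T.verts, IsDomVert T.coe ⟨v, hv⟩ := by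
  rw [mem_domFinset]
  exact ⟨fun ⟨hv, h⟩ => ⟨hv, (isDomVert_coe_iff hv).mpr h⟩,
    fun ⟨hv, h⟩ => ⟨hv, (isDomVert_coe_iff hv).mp h⟩⟩

theorem coe_subset_verts_of_subset_domFinset {T : G.Subgraph} {K : Finset V}
    (hK : K ⊆ T.domFinset) : (K : Set V) ⊆ T.verts :=
  fun _ hv => (mem_domFinset.mp (hK hv)).1

theorem card_domFinset_of_iso {H : SimpleGraph α} {T : G.Subgraph} (φ : T.coe ≃g H) :
    #T.domFinset = Nat.card {a // IsDomVert H a} := by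
  rw [← Nat.card_eq_finsetCard]
  calc Nat.card T.domFinset = Nat.card {x : T.verts // IsDomVert T.coe x} :=
        Nat.card_congr ((Equiv.subtypeEquivRight fun _ => mem_domFinset_iff_isDomVert).trans
          (Equiv.subtypeSubtypeEquivSubtypeExists _ _).symm)
    _ = Nat.card {a // IsDomVert H a} :=
        Nat.card_congr (φ.toEquiv.subtypeEquiv fun _ => φ.isDomVert_iff.symm)

theorem mem_domFinset_of_iso {H : SimpleGraph α} {T : G.Subgraph} (φ : T.coe ≃g H) {x : α}
    (hx : IsDomVert H x) : ↑(φ.symm x) ∈ T.domFinset :=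
  mem_domFinset_iff_isDomVert.mpr ⟨(φ.symm x).2, φ.symm.isDomVert_iff.mpr hx⟩

theorem isClique_of_subset_domFinset {T : G.Subgraph} {K : Finset V} (hK : K ⊆ T.domFinset) :
    G.IsClique (K : Set V) := fun _ hv w hw hne =>
  T.adj_sub ((mem_domFinset.mp (hK hv)).2 w (mem_domFinset.mp (hK hw)).1 hne.symm)

theorem ncard_verts_diff_of_iso {H : SimpleGraph α} [Fintype α] {T : G.Subgraph}
    (φ : T.coe ≃g H) {K : Finset V} (hK : K ⊆ T.domFinset) :
    (T.verts \ K).ncard = Fintype.card α - #K := by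
  rw [Set.ncard_sdiff (coe_subset_verts_of_subset_domFinset hK), ncard_verts_of_iso φ,
    Set.ncard_coe_finset, Nat.card_eq_fintype_card]

theorem eq_of_adj_iff_of_subset_domFinset {T₁ T₂ : G.Subgraph} {K : Finset V}
    (hverts : T₁.verts = T₂.verts) (h₁ : K ⊆ T₁.domFinset) (h₂ : K ⊆ T₂.domFinset)
    (hadj : ∀ x ∈ T₁.verts \ K, ∀ y ∈ T₁.verts \ K, T₁.Adj x y ↔ T₂.Adj x y) : T₁ = T₂ := by
  have hK : ∀ T : G.Subgraph, K ⊆ T.domFinset → ∀ {x y}, x ∈ K →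
      (T.Adj x y ↔ y ∈ T.verts ∧ y ≠ x) := fun T hT x y hx =>
    ⟨fun h => ⟨T.edge_vert h.symm, (T.adj_sub h).ne'⟩,
      fun h => (mem_domFinset.mp (hT hx)).2 y h.1 h.2⟩
  refine Subgraph.ext hverts (funext₂ fun x y => propext ?_)
  by_cases hx : x ∈ K
  · rw [hK _ h₁ hx, hK _ h₂ hx, hverts]
  by_cases hy : y ∈ K
  · rw [T₁.adj_comm, T₂.adj_comm, hK _ h₁ hy, hK _ h₂ hy, hverts]
  by_cases hxy : x ∈ T₁.verts ∧ y ∈ T₁.verts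
  · exact hadj x ⟨hxy.1, hx⟩ y ⟨hxy.2, hy⟩
  · refine iff_of_false (fun h => hxy ⟨T₁.edge_vert h, T₁.edge_vert h.symm⟩)
      (fun h => hxy ?_)
    rw [hverts]
    exact ⟨T₂.edge_vert h, T₂.edge_vert h.symm⟩

variable [DecidableRel G.Adj]

theorem degree_le_sSup_of_mem_domFinset {T : G.Subgraph} {v : V} (hv : v ∈ T.domFinset) :
    G.degree v ≤ sSup {d : ℕ | ∃ v ∈ T.verts,
      (∀ w ∈ T.verts, w ≠ v → T.Adj v w) ∧ d = G.degree v} :=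
  le_csSup ⟨Fintype.card V, by rintro _ ⟨w, -, -, rfl⟩; exact (G.degree_lt_card_verts w).le⟩
    ⟨v, (mem_domFinset.mp hv).1, (mem_domFinset.mp hv).2, rfl⟩

theorem ncard_verts_sub_one_le_degree {T : G.Subgraph} {v : V} (hv : v ∈ T.domFinset) :
    T.verts.ncard - 1 ≤ G.degree v := by
  obtain ⟨hvT, hdom⟩ := mem_domFinset.mp hv
  have hsub : T.verts \ {v} ⊆ G.neighborSet v := fun w ⟨hw, hwv⟩ =>
    T.adj_sub (hdom w hw hwv)
  rw [← Set.ncard_sdiff_singleton_of_mem hvT, ← card_neighborSet_eq_degree,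
    ← Nat.card_eq_fintype_card, Nat.card_coe_set_eq]
  exact Set.ncard_le_ncard hsub

theorem verts_diff_subset_commonNeighborFinset {T : G.Subgraph} {K : Finset V}
    (hK : K ⊆ T.domFinset) : T.verts \ K ⊆ G.commonNeighborFinset K := fun w ⟨hw, hwK⟩ =>
  mem_commonNeighborFinset.mpr fun _ hv =>
    T.adj_sub ((mem_domFinset.mp (hK hv)).2 w hw fun h => hwK (h ▸ hv))

end SimpleGraph.Subgraph

open SimpleGraph.Subgraph

variable {H : SimpleGraph α} {G : SimpleGraph V} [Fintype V]

/-- A copy of `H` in which `K` is dominating is determined by its edges off `K`, and these form a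
copy of `H` with `#K` dominating vertices deleted. -/
theorem card_le_copyCount_of_verts_diff_eq_range [Fintype α] [Fintype β] {U : Finset α}
    (hU : ∀ x ∈ U, IsDomVert H x) {K : Finset V} (hKU : #K = #U) (e : β ↪ V)
    (𝒯 : Finset G.Subgraph) (h𝒯 : ∀ T ∈ 𝒯, Nonempty (T.coe ≃g H) ∧ K ⊆ T.domFinset ∧
      T.verts \ K = Set.range e) :
    #𝒯 ≤ copyCount (H.induce (U : Set α)ᶜ) (⊤ : SimpleGraph β) := by
  rw [← Nat.card_eq_finsetCard, copyCount]
  refine Nat.card_le_card_of_injective (fun T => ⟨T.1.comapTop e, ?_⟩) fun T₁ T₂ h => ?_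
  · obtain ⟨⟨φ⟩, hK, hW⟩ := h𝒯 T.1 T.2
    set S : Set T.1.verts := {x | ↑x ∈ K}
    have hS : ∀ x ∈ S, IsDomVert T.1.coe x := fun x hx =>
      (mem_domFinset_iff_isDomVert.mp (hK hx)).2
    have hSU : Nat.card S = Nat.card (U : Set α) := calc
      Nat.card S = Nat.card K := Nat.card_congr (Equiv.subtypeSubtypeEquivSubtype
        fun hx => coe_subset_verts_of_subset_domFinset hK hx)
      _ = Nat.card (U : Set α) := by
        rw [Nat.card_eq_finsetCard, hKU, Nat.card_coe_set_eq, Set.ncard_coe_finset]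
    have hrange : ({x | ↑x ∈ Set.range e} : Set T.1.verts) = Sᶜ := by
      ext x
      simp [S, ← hW]
    obtain ⟨ψ⟩ := φ.nonempty_induce_compl hS hU hSU
    exact ⟨(T.1.comapTopIso e).trans (hrange ▸ ψ)⟩
  · have hverts : ∀ T ∈ 𝒯, T.verts = (K : Set V) ∪ Set.range e := fun T hT => by
      obtain ⟨-, hK, hW⟩ := h𝒯 T hT
      rw [← hW, Set.union_sdiff_cancel (coe_subset_verts_of_subset_domFinset hK)]
    have hadj := congrArg SimpleGraph.Subgraph.Adj (congrArg Subtype.val h)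
    refine Subtype.ext (eq_of_adj_iff_of_subset_domFinset
      ((hverts _ T₁.2).trans (hverts _ T₂.2).symm) (h𝒯 _ T₁.2).2.1 (h𝒯 _ T₂.2).2.1 ?_)
    rintro _ hx _ hy
    rw [(h𝒯 _ T₁.2).2.2] at hx hy
    obtain ⟨a, rfl⟩ := hx
    obtain ⟨b, rfl⟩ := hy
    exact iff_of_eq (congrFun₂ hadj a b)

variable [DecidableRel G.Adj]

/-- Each copy `T` is counted once for each of the `(dom H).choose u` cliques `K ⊆ dom T`. -/
theorem choose_mul_sum_copyFinset [DecidableEq V] (u : ℕ) (f : G.Subgraph → ℝ) :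
    ((Nat.card {a // IsDomVert H a}).choose u : ℝ) * ∑ T ∈ G.copyFinset H, f T =
      ∑ K ∈ G.cliqueFinset u, ∑ T ∈ G.copyFinset H with K ⊆ T.domFinset, f T := by
  rw [mul_sum]
  calc ∑ T ∈ G.copyFinset H, ((Nat.card {a // IsDomVert H a}).choose u : ℝ) * f T
      = ∑ T ∈ G.copyFinset H, ∑ _K ∈ T.domFinset.powersetCard u, f T :=
        sum_congr rfl fun T hT => by
          obtain ⟨φ⟩ := SimpleGraph.mem_copyFinset.mp hT
          rw [sum_const, card_powersetCard, T.card_domFinset_of_iso φ, nsmul_eq_mul]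
    _ = _ := sum_comm' fun T K => by
        simp only [mem_powersetCard, mem_filter, SimpleGraph.mem_cliqueFinset_iff,
          SimpleGraph.isNClique_iff]
        exact ⟨fun ⟨hT, hK, hc⟩ => ⟨⟨hT, hK⟩, T.isClique_of_subset_domFinset hK, hc⟩,
          fun ⟨⟨hT, hK⟩, _, hc⟩ => ⟨hT, hK, hc⟩⟩

variable [Fintype α]

theorem card_le_copyCount_mul_choose {U : Finset α} (hU : ∀ x ∈ U, IsDomVert H x)
    {K : Finset V} (hKU : #K = #U) (𝒯 : Finset G.Subgraph)
    (h𝒯 : ∀ T ∈ 𝒯, Nonempty (T.coe ≃g H) ∧ K ⊆ T.domFinset) :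
    #𝒯 ≤ copyCount (H.induce (U : Set α)ᶜ) (⊤ : SimpleGraph (Fin (Fintype.card α - #U))) *
      (#(G.commonNeighborFinset K)).choose (Fintype.card α - #U) := by
  classical
  let f : G.Subgraph → Finset V := fun T => {w | w ∈ T.verts ∧ w ∉ K}
  have hf : ∀ T, (f T : Set V) = T.verts \ K := fun T => by ext; simp [f]
  rw [← card_powersetCard]
  refine card_le_mul_card_image_of_maps_to (f := f) (fun T hT => ?_) _ fun W hW => ?_
  · obtain ⟨⟨φ⟩, hK⟩ := h𝒯 T hT
    rw [mem_powersetCard, ← coe_subset, hf, ← Set.ncard_coe_finset, hf,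
      T.ncard_verts_diff_of_iso φ hK, hKU]
    exact ⟨T.verts_diff_subset_commonNeighborFinset hK, rfl⟩
  · obtain ⟨e, he⟩ := exists_fin_embedding_range_eq (mem_powersetCard.mp hW).2
    refine card_le_copyCount_of_verts_diff_eq_range hU hKU e _ fun T hT => ?_
    obtain ⟨hT𝒯, rfl⟩ := mem_filter.mp hT
    exact ⟨(h𝒯 T hT𝒯).1, (h𝒯 T hT𝒯).2, by rw [← hf, he]⟩

theorem sum_one_div_choose_le_copyCount {θ : G.Subgraph → ℕ}
    (hθ : ∀ T : G.Subgraph, ∀ v ∈ T.domFinset, G.degree v ≤ θ T) {U : Finset α}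
    (hU : ∀ x ∈ U, IsDomVert H x) (hu : 1 ≤ #U) {K : Finset V} (hK : G.IsNClique #U K)
    (𝒯 : Finset G.Subgraph) (h𝒯 : ∀ T ∈ 𝒯, Nonempty (T.coe ≃g H) ∧ K ⊆ T.domFinset) :
    ∑ T ∈ 𝒯, (1 : ℝ) / (θ T - #U + 1).choose (Fintype.card α - #U) ≤
      copyCount (H.induce (U : Set α)ᶜ) (⊤ : SimpleGraph (Fin (Fintype.card α - #U))) := by
  set A := G.commonNeighborFinset K
  set m := Fintype.card α - #U
  have hterm : ∀ T ∈ 𝒯, (1 : ℝ) / (θ T - #U + 1).choose m ≤ 1 / (#A).choose m := by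
    intro T hT
    obtain ⟨⟨φ⟩, hKT⟩ := h𝒯 T hT
    obtain ⟨v, hv⟩ := card_pos.mp (hK.card_eq ▸ hu)
    have hmA : m ≤ #A := by
      simp only [m]
      rw [← hK.card_eq, ← T.ncard_verts_diff_of_iso φ hKT, ← Set.ncard_coe_finset]
      exact Set.ncard_le_ncard (T.verts_diff_subset_commonNeighborFinset hKT)
    have hdeg : #A + (#U - 1) ≤ θ T := by
      rw [← hK.card_eq]
      exact (SimpleGraph.card_commonNeighborFinset_add_le_degree hK.isClique hv).trans
        (hθ T v (hKT hv))
    refine one_div_le_one_div_of_le (by exact_mod_cast Nat.choose_pos hmA) ?_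
    exact_mod_cast Nat.choose_le_choose m (by omega)
  calc ∑ T ∈ 𝒯, (1 : ℝ) / (θ T - #U + 1).choose m
      ≤ ∑ _T ∈ 𝒯, (1 : ℝ) / (#A).choose m := sum_le_sum hterm
    _ = #𝒯 / (#A).choose m := by rw [sum_const, nsmul_eq_mul, mul_one_div]
    _ ≤ _ := div_le_of_le_mul₀ (by positivity) (by positivity)
        (by exact_mod_cast card_le_copyCount_mul_choose hU hK.card_eq 𝒯 h𝒯)

end

theorem stmt_9_general {α V : Type*} [Fintype α] [Fintype V] [DecidableEq V]
    (H : SimpleGraph α) (G : SimpleGraph V) [DecidableRel G.Adj]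
    (t u : ℕ) (hcard : Fintype.card α = t)
    (hdom : 1 ≤ Nat.card {v : α // IsDomVert H v})
    (hu1 : 1 ≤ u) (hu2 : u ≤ Nat.card {v : α // IsDomVert H v})
    (U : Finset α) (hU : U.card = u) (hUdom : ∀ v ∈ U, IsDomVert H v)
    (θ : G.Subgraph → ℕ)
    (hθ : ∀ T : G.Subgraph,
      θ T = sSup {d : ℕ | ∃ v ∈ T.verts,
        (∀ w ∈ T.verts, w ≠ v → T.Adj v w) ∧ d = G.degree v}) :
    (∀ T : G.Subgraph, Nonempty (T.coe ≃g H) → t - 1 ≤ θ T) ∧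
    ∑ᶠ T ∈ {T : G.Subgraph | Nonempty (T.coe ≃g H)},
        (1 : ℝ) / ((θ T - u + 1).choose (t - u) : ℝ) ≤
      (copyCount (H.induce ((↑U : Set α)ᶜ)) (⊤ : SimpleGraph (Fin (t - u))) : ℝ) /
          ((Nat.card {v : α // IsDomVert H v}).choose u : ℝ) *
        ((G.cliqueFinset u).card : ℝ) := by
  subst hcard hU
  have hθdeg : ∀ T : G.Subgraph, ∀ v ∈ T.domFinset, G.degree v ≤ θ T := fun T v hv =>
    (hθ T).symm ▸ T.degree_le_sSup_of_mem_domFinset hv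
  refine ⟨fun T ⟨φ⟩ => ?_, ?_⟩
  · obtain ⟨x, hx⟩ := (Nat.card_pos_iff.mp hdom).1.some
    have hv := T.mem_domFinset_of_iso φ hx
    calc Fintype.card α - 1 = T.verts.ncard - 1 := by
          rw [T.ncard_verts_of_iso φ, Nat.card_eq_fintype_card]
      _ ≤ G.degree _ := T.ncard_verts_sub_one_le_degree hv
      _ ≤ θ T := hθdeg T _ hv
  · rw [SimpleGraph.finsum_mem_copies_eq_sum_copyFinset, div_mul_eq_mul_div,
      le_div_iff₀ (by exact_mod_cast Nat.choose_pos hu2), mul_comm, choose_mul_sum_copyFinset,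
      mul_comm, ← nsmul_eq_mul, ← Finset.sum_const]
    refine Finset.sum_le_sum fun K hK => sum_one_div_choose_le_copyCount hθdeg hUdom hu1
      (SimpleGraph.mem_cliqueFinset_iff.mp hK) _ fun T hT => ?_
    obtain ⟨hT, hKT⟩ := Finset.mem_filter.mp hT
    exact ⟨SimpleGraph.mem_copyFinset.mp hT, hKT⟩

theorem stmt_9 {α V : Type*} [Fintype α] [DecidableEq α] [Fintype V] [DecidableEq V]
    (H : SimpleGraph α) (G : SimpleGraph V) [DecidableRel G.Adj]
    (t u : ℕ) (hcard : Fintype.card α = t)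
    (hdom : 1 ≤ Nat.card {v : α // IsDomVert H v})
    (hu1 : 1 ≤ u) (hu2 : u ≤ Nat.card {v : α // IsDomVert H v})
    (U : Finset α) (hU : U.card = u) (hUdom : ∀ v ∈ U, IsDomVert H v)
    (θ : G.Subgraph → ℕ)
    (hθ : ∀ T : G.Subgraph,
      θ T = sSup {d : ℕ | ∃ v ∈ T.verts,
        (∀ w ∈ T.verts, w ≠ v → T.Adj v w) ∧ d = G.degree v}) :
    (∀ T : G.Subgraph, Nonempty (T.coe ≃g H) → t - 1 ≤ θ T) ∧
    ∑ᶠ T ∈ {T : G.Subgraph | Nonempty (T.coe ≃g H)},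
        (1 : ℝ) / ((θ T - u + 1).choose (t - u) : ℝ) ≤
      (copyCount (H.induce ((↑U : Set α)ᶜ)) (⊤ : SimpleGraph (Fin (t - u))) : ℝ) /
          ((Nat.card {v : α // IsDomVert H v}).choose u : ℝ) *
        ((G.cliqueFinset u).card : ℝ) :=
  stmt_9_general H G t u hcard hdom hu1 hu2 U hU hUdom θ hθ
end

section
/- Let G be a graph on n vertices. For each edge e = {u, v} of G define s(e) = 1 / max(d_G(u), d_G(v)). Then the sum of s(e) over all edges e of G is at most n/2, and equality holds if and only if G has no isolated vertices and every connected component of G is regular. -/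
/-!
For an edge `uv` whose endpoints have degrees `a, b > 0`, `1 / max a b ≤ (1/a + 1/b) / 2`, with
equality iff `a = b`. Summing the right-hand side over all edges, every vertex `v` collects `d(v)`
copies of `1 / d(v)`, so twice the total weight is at most the number of non-isolated vertices,
hence at most `n`. Equality forces every vertex to be non-isolated and adjacent vertices to have
equal degrees, i.e. the degree to be constant on each connected component.
-/

/-- The weight of an edge `{u, v}`: `1 / max(d_G(u), d_G(v))`. -/
noncomputable def edgeWeight {V : Type*} [Fintype V] (G : SimpleGraph V)
    [DecidableRel G.Adj] : Sym2 V → ℝ :=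
  Sym2.lift ⟨fun u v => (1 : ℝ) / (max (G.degree u) (G.degree v) : ℕ),
    fun u v => by show (1:ℝ) / (max (G.degree u) (G.degree v) : ℕ) = _; rw [max_comm]⟩

open Finset

lemma inv_max_le_inv_add_inv_div_two {a b : ℝ} (ha : 0 < a) (hb : 0 < b) :
    (max a b)⁻¹ ≤ (a⁻¹ + b⁻¹) / 2 := by
  rcases le_total a b with hab | hab
  · have := inv_anti₀ ha hab
    rw [max_eq_right hab]; linarith
  · have := inv_anti₀ hb hab
    rw [max_eq_left hab]; linarith

lemma inv_max_eq_inv_add_inv_div_two_iff {a b : ℝ} :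
    (max a b)⁻¹ = (a⁻¹ + b⁻¹) / 2 ↔ a = b := by
  rcases le_total a b with hab | hab
  · rw [max_eq_right hab, eq_comm (a := a), ← inv_inj (a := b)]
    constructor <;> intro h <;> linarith
  · rw [max_eq_left hab, ← inv_inj (a := a)]
    constructor <;> intro h <;> linarith

namespace SimpleGraph

lemma Reachable.eq_of_forall_adj {V α : Type*} {G : SimpleGraph V} {f : V → α}
    (hf : ∀ u v, G.Adj u v → f u = f v) {u v : V} (h : G.Reachable u v) : f u = f v := by
  obtain ⟨p⟩ := h
  induction p with
  | nil => rfl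
  | cons hadj _ ih => exact (hf _ _ hadj).trans ih

variable {V : Type*} [Fintype V] (G : SimpleGraph V) [DecidableRel G.Adj]

lemma edgeWeight_mk (u v : V) :
    edgeWeight G s(u, v) = (max (G.degree u : ℝ) (G.degree v))⁻¹ := by
  simp [edgeWeight, Nat.cast_max]

lemma two_mul_edgeWeight_le_of_adj {u v : V} (h : G.Adj u v) :
    2 * edgeWeight G s(u, v) ≤ (G.degree u : ℝ)⁻¹ + (G.degree v : ℝ)⁻¹ := by
  have hu : (0 : ℝ) < G.degree u := by exact_mod_cast G.degree_pos_iff_exists_adj u |>.2 ⟨v, h⟩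
  have hv : (0 : ℝ) < G.degree v := by
    exact_mod_cast G.degree_pos_iff_exists_adj v |>.2 ⟨u, h.symm⟩
  have := inv_max_le_inv_add_inv_div_two hu hv
  rw [edgeWeight_mk]; linarith

lemma two_mul_edgeWeight_eq_iff (u v : V) :
    2 * edgeWeight G s(u, v) = (G.degree u : ℝ)⁻¹ + (G.degree v : ℝ)⁻¹ ↔
      G.degree u = G.degree v := by
  rw [edgeWeight_mk, ← Nat.cast_inj (R := ℝ),
    ← inv_max_eq_inv_add_inv_div_two_iff (a := (G.degree u : ℝ))]
  constructor <;> intro h <;> linarith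

variable [DecidableEq V]

lemma sum_edgeFinset_sum_toFinset {M : Type*} [AddCommMonoid M] (f : V → M) :
    ∑ e ∈ G.edgeFinset, ∑ v ∈ e.toFinset, f v = ∑ v, G.degree v • f v := by
  rw [Finset.sum_comm' (t' := univ) (s' := fun v => G.incidenceFinset v)]
  · simp_rw [sum_const, card_incidenceFinset_eq_degree]
  · intro e v
    simp [mem_incidenceFinset, incidenceSet, and_comm]

lemma sum_edgeFinset_sum_inv_degree :
    ∑ e ∈ G.edgeFinset, ∑ v ∈ e.toFinset, (G.degree v : ℝ)⁻¹ = #{v | G.degree v ≠ 0} := by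
  rw [sum_edgeFinset_sum_toFinset, card_filter, Nat.cast_sum]
  refine sum_congr rfl fun v _ => ?_
  by_cases hv : G.degree v = 0 <;> simp [hv]

lemma sum_toFinset_inv_degree_of_adj {u v : V} (h : G.Adj u v) :
    ∑ w ∈ s(u, v).toFinset, (G.degree w : ℝ)⁻¹ = (G.degree u : ℝ)⁻¹ + (G.degree v : ℝ)⁻¹ := by
  rw [Sym2.toFinset_mk_eq, sum_pair h.ne]

lemma two_mul_edgeWeight_le {e : Sym2 V} (he : e ∈ G.edgeFinset) :
    2 * edgeWeight G e ≤ ∑ v ∈ e.toFinset, (G.degree v : ℝ)⁻¹ := by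
  induction e with
  | _ u v =>
    rw [mem_edgeFinset, mem_edgeSet] at he
    rw [sum_toFinset_inv_degree_of_adj G he]
    exact two_mul_edgeWeight_le_of_adj G he

lemma two_mul_sum_edgeWeight_le :
    2 * ∑ e ∈ G.edgeFinset, edgeWeight G e ≤ #{v | G.degree v ≠ 0} := by
  rw [mul_sum, ← sum_edgeFinset_sum_inv_degree]
  exact sum_le_sum fun e he => two_mul_edgeWeight_le G he

lemma two_mul_sum_edgeWeight_eq_iff :
    2 * ∑ e ∈ G.edgeFinset, edgeWeight G e = #{v | G.degree v ≠ 0} ↔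
      ∀ u v, G.Adj u v → G.degree u = G.degree v := by
  rw [mul_sum, ← sum_edgeFinset_sum_inv_degree,
    sum_eq_sum_iff_of_le fun e he => two_mul_edgeWeight_le G he]
  constructor
  · intro h u v huv
    rw [← two_mul_edgeWeight_eq_iff, ← sum_toFinset_inv_degree_of_adj G huv]
    exact h _ (mem_edgeFinset.2 huv)
  · intro h e he
    induction e with
    | _ u v =>
      rw [mem_edgeFinset, mem_edgeSet] at he
      rw [sum_toFinset_inv_degree_of_adj G he, two_mul_edgeWeight_eq_iff]
      exact h u v he

end SimpleGraph

open SimpleGraph in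
theorem stmt_12 {V : Type*} [Fintype V] [DecidableEq V]
    (G : SimpleGraph V) [DecidableRel G.Adj]
    (n : ℕ) (hn : Fintype.card V = n) :
    ∑ e ∈ G.edgeFinset, edgeWeight G e ≤ (n : ℝ) / 2 ∧
    (∑ e ∈ G.edgeFinset, edgeWeight G e = (n : ℝ) / 2 ↔
      (∀ v : V, 0 < G.degree v) ∧
        ∀ v w : V, G.Reachable v w → G.degree v = G.degree w) := by
  have hweight := two_mul_sum_edgeWeight_le G
  have hcard : (#{v | G.degree v ≠ 0} : ℝ) ≤ n := by
    rw [← hn, ← card_univ]; exact_mod_cast card_filter_le _ _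
  have hcard_eq : (#{v | G.degree v ≠ 0} : ℝ) = n ↔ ∀ v, 0 < G.degree v := by
    rw [← hn, Nat.cast_inj, ← card_univ, card_filter_eq_iff]
    simp [Nat.pos_iff_ne_zero]
  have hreach : (∀ v w, G.Reachable v w → G.degree v = G.degree w) ↔
      ∀ u v, G.Adj u v → G.degree u = G.degree v :=
    ⟨fun h u v huv => h u v huv.reachable, fun h _ _ => Reachable.eq_of_forall_adj h⟩
  refine ⟨by linarith, ?_⟩
  rw [hreach, ← two_mul_sum_edgeWeight_eq_iff, ← hcard_eq]
  constructor
  · intro h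
    constructor <;> linarith
  · rintro ⟨h, h'⟩
    linarith
end

section
/- Let t ≥ 1 and let G be a graph on n vertices. For each t-clique T of G define θ_G(T) = max{ d_G(v) : v ∈ T } and s^1_G(T) = 1 / C(θ_G(T), t-1). Then the sum of s^1_G(T) over all t-cliques T of G is at most n/t. Moreover, when t ≥ 3 equality holds if and only if G is a disjoint union of complete graphs each of order at least t. -/
/-!
A t-clique T through v has θ(T) ≥ d(v), and T ↦ T \ {v} injects the t-cliques through v into
the (t-1)-subsets of N(v); so the weights of the t-cliques through any vertex sum to at most 1,
and summing over all vertices counts every clique t times.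

Equality forces every (t-1)-subset of every N(v) to span a clique together with v. For t ≥ 3
such a subset can contain any two neighbours of v, so every N(v) is a clique: adjacency is
transitive and the components are complete, of order d(v) + 1 ≥ t. Conversely, in a disjoint
union of such complete graphs θ(T) = d(v) for every clique T through v and the injection is
onto.
-/

open Finset

namespace SimpleGraph

section Components

variable {V : Type*} {G : SimpleGraph V}

lemma adj_of_reachable_of_isClique_neighborSet (hN : ∀ v, G.IsClique (G.neighborSet v))
    {v w : V} (hvw : G.Reachable v w) (hne : v ≠ w) : G.Adj v w := by
  obtain ⟨p⟩ := hvw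
  induction p with
  | nil => exact absurd rfl hne
  | @cons a b c hab _ ih =>
    obtain rfl | hbc := eq_or_ne b c
    · exact hab
    · exact hN b hab.symm (ih hbc) hne

lemma isClique_neighborSet_of_adj_of_reachable
    (hadj : ∀ v w, G.Reachable v w → v ≠ w → G.Adj v w) (v : V) :
    G.IsClique (G.neighborSet v) :=
  fun _ hu _ hw hne => hadj _ _ (((G.mem_neighborSet v _).1 hu).reachable.symm.trans
    ((G.mem_neighborSet v _).1 hw).reachable) hne

variable [Fintype V] [DecidableRel G.Adj]

lemma ncard_insert_neighborSet (v : V) : (insert v (G.neighborSet v)).ncard = G.degree v + 1 := by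
  rw [Set.ncard_insert_of_notMem (G.notMem_neighborSet_self), ← Nat.card_coe_set_eq,
    Nat.card_eq_fintype_card, card_neighborSet_eq_degree]

lemma degree_add_one_le_card_reachable (v : V) :
    G.degree v + 1 ≤ Nat.card {w | G.Reachable v w} := by
  rw [Nat.card_coe_set_eq, ← ncard_insert_neighborSet]
  refine Set.ncard_le_ncard (Set.insert_subset (Reachable.refl v) fun w hw => ?_)
  exact ((G.mem_neighborSet v w).1 hw).reachable

lemma degree_add_one_eq_card_reachable
    (hadj : ∀ v w, G.Reachable v w → v ≠ w → G.Adj v w) (v : V) :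
    G.degree v + 1 = Nat.card {w | G.Reachable v w} := by
  rw [Nat.card_coe_set_eq, ← ncard_insert_neighborSet]
  congr 1
  ext w
  obtain rfl | hne := eq_or_ne v w
  · simp
  · simp only [Set.mem_insert_iff, hne.symm, mem_neighborSet, Set.mem_ofPred_eq, false_or]
    exact ⟨fun h => h.reachable, fun h => hadj v w h hne⟩

lemma degree_eq_of_reachable (hadj : ∀ v w, G.Reachable v w → v ≠ w → G.Adj v w)
    {u v : V} (huv : G.Reachable u v) : G.degree u = G.degree v := by
  have hu := degree_add_one_eq_card_reachable hadj u
  have hv := degree_add_one_eq_card_reachable hadj v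
  have : {w | G.Reachable u w} = {w | G.Reachable v w} :=
    Set.ext fun w => ⟨huv.symm.trans, huv.trans⟩
  rw [this] at hu
  omega

end Components

lemma forall_powersetCard_isClique_iff {V : Type*} [DecidableEq V] {G : SimpleGraph V}
    {s : Finset V} {k : ℕ} (hk : 2 ≤ k) (hks : k ≤ #s) :
    (∀ S ∈ s.powersetCard k, G.IsClique (S : Set V)) ↔ G.IsClique (s : Set V) := by
  refine ⟨fun h u hu w hw huw => ?_, fun h S hS => h.subset (mem_powersetCard.1 hS).1⟩
  obtain ⟨S, huwS, hSs, hSk⟩ := exists_subsuperset_card_eq (s := {u, w})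
    (by simp_all [insert_subset_iff]) (by rwa [card_pair huw]) hks
  exact h S (mem_powersetCard.2 ⟨hSs, hSk⟩) (huwS (by simp)) (huwS (by simp)) huw

variable {V : Type*} [Fintype V] [DecidableEq V] (G : SimpleGraph V) [DecidableRel G.Adj]

def cliquesThrough (t : ℕ) (v : V) : Finset (Finset V) := {T ∈ G.cliqueFinset t | v ∈ T}

noncomputable def cliqueWeight (t : ℕ) (T : Finset V) : ℝ :=
  1 / ((T.sup fun u => G.degree u).choose (t - 1) : ℝ)

lemma sum_sum_cliquesThrough {M : Type*} [AddCommMonoid M] (t : ℕ) (f : Finset V → M) :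
    ∑ v, ∑ T ∈ G.cliquesThrough t v, f T = t • ∑ T ∈ G.cliqueFinset t, f T := by
  simp_rw [cliquesThrough, sum_filter]
  rw [sum_comm, smul_sum]
  refine sum_congr rfl fun T hT => ?_
  rw [sum_ite_mem, univ_inter, sum_const, (mem_cliqueFinset_iff.1 hT).2]

variable {G} {t : ℕ} {v : V}

lemma mem_cliquesThrough {T : Finset V} :
    T ∈ G.cliquesThrough t v ↔ G.IsNClique t T ∧ v ∈ T := by
  simp [cliquesThrough]

lemma card_cliquesThrough (ht : 1 ≤ t) :
    #(G.cliquesThrough t v) =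
      #(((G.neighborFinset v).powersetCard (t - 1)).filter
        fun S : Finset V => G.IsClique (S : Set V)) := by
  refine card_nbij' (·.erase v) (insert v) (fun T hT => ?_) (fun S hS => ?_)
    (fun T hT => insert_erase (mem_cliquesThrough.1 hT).2) (fun S hS => ?_)
  · obtain ⟨hT, hvT⟩ := mem_cliquesThrough.1 hT
    have hTv := hT.erase_of_mem hvT
    simp only [coe_filter, mem_powersetCard, Set.mem_ofPred_eq]
    refine ⟨⟨fun u hu => ?_, hTv.2⟩, hTv.1⟩
    rw [mem_erase] at hu
    exact (G.mem_neighborFinset v u).2 (hT.1 hvT hu.2 hu.1.symm)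
  · simp only [coe_filter, mem_powersetCard, Set.mem_ofPred_eq] at hS
    obtain ⟨⟨hSN, hSt⟩, hS⟩ := hS
    refine mem_cliquesThrough.2 ⟨?_, mem_insert_self v S⟩
    rw [← Nat.sub_add_cancel ht]
    exact IsNClique.insert ⟨hS, hSt⟩ fun b hb => (G.mem_neighborFinset v b).1 (hSN hb)
  · simp only [coe_filter, mem_powersetCard, Set.mem_ofPred_eq] at hS
    exact erase_insert fun hv => G.irrefl ((G.mem_neighborFinset v v).1 (hS.1.1 hv))

lemma card_cliquesThrough_le (ht : 1 ≤ t) :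
    #(G.cliquesThrough t v) ≤ (G.degree v).choose (t - 1) := by
  rw [card_cliquesThrough ht, ← card_neighborFinset_eq_degree, ← card_powersetCard]
  exact card_filter_le _ _

lemma card_cliquesThrough_eq_choose_iff (ht : 1 ≤ t) :
    #(G.cliquesThrough t v) = (G.degree v).choose (t - 1) ↔
      ∀ S ∈ (G.neighborFinset v).powersetCard (t - 1), G.IsClique (S : Set V) := by
  rw [card_cliquesThrough ht, ← card_neighborFinset_eq_degree, ← card_powersetCard,
    card_filter_eq_iff]

lemma le_degree_of_mem_cliquesThrough (ht : 1 ≤ t) {T : Finset V}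
    (hT : T ∈ G.cliquesThrough t v) : t - 1 ≤ G.degree v := by
  by_contra! h
  have := card_cliquesThrough_le (G := G) (v := v) ht
  rw [Nat.choose_eq_zero_of_lt h, Nat.le_zero, card_eq_zero] at this
  simp [this] at hT

lemma cliqueWeight_le_of_mem_cliquesThrough (ht : 1 ≤ t) {T : Finset V}
    (hT : T ∈ G.cliquesThrough t v) :
    G.cliqueWeight t T ≤ 1 / (G.degree v).choose (t - 1) := by
  have hpos := Nat.choose_pos (le_degree_of_mem_cliquesThrough ht hT)
  unfold cliqueWeight
  gcongr
  exact le_sup (f := fun u => G.degree u) (mem_cliquesThrough.1 hT).2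

lemma sum_cliqueWeight_cliquesThrough_le_div (ht : 1 ≤ t) :
    ∑ T ∈ G.cliquesThrough t v, G.cliqueWeight t T ≤
      #(G.cliquesThrough t v) / (G.degree v).choose (t - 1) := by
  calc _ ≤ ∑ _T ∈ G.cliquesThrough t v, (1 / (G.degree v).choose (t - 1) : ℝ) :=
        sum_le_sum fun _ hT => cliqueWeight_le_of_mem_cliquesThrough ht hT
    _ = _ := by rw [sum_const, nsmul_eq_mul, mul_one_div]

lemma sum_cliqueWeight_cliquesThrough_le_one (ht : 1 ≤ t) :
    ∑ T ∈ G.cliquesThrough t v, G.cliqueWeight t T ≤ 1 :=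
  (sum_cliqueWeight_cliquesThrough_le_div ht).trans
    (div_le_one_of_le₀ (by exact_mod_cast card_cliquesThrough_le (G := G) (v := v) ht)
      (by positivity))

lemma card_cliquesThrough_eq_choose_of_sum_eq_one (ht : 1 ≤ t)
    (h : ∑ T ∈ G.cliquesThrough t v, G.cliqueWeight t T = 1) :
    #(G.cliquesThrough t v) = (G.degree v).choose (t - 1) := by
  refine (card_cliquesThrough_le ht).antisymm (not_lt.1 fun hlt => ?_)
  have hlt' : (#(G.cliquesThrough t v) : ℝ) < (G.degree v).choose (t - 1) := by
    exact_mod_cast hlt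
  have := (sum_cliqueWeight_cliquesThrough_le_div (G := G) (v := v) ht).trans_lt
    ((div_lt_one (by exact_mod_cast (Nat.zero_le _).trans_lt hlt)).2 hlt')
  exact this.ne h

lemma sum_cliqueWeight_cliquesThrough_eq_one (hd : t - 1 ≤ G.degree v)
    (hcard : #(G.cliquesThrough t v) = (G.degree v).choose (t - 1))
    (hsup : ∀ T ∈ G.cliquesThrough t v, (T.sup fun u => G.degree u) = G.degree v) :
    ∑ T ∈ G.cliquesThrough t v, G.cliqueWeight t T = 1 := by
  have hpos : ((G.degree v).choose (t - 1) : ℝ) ≠ 0 := by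
    exact_mod_cast (Nat.choose_pos hd).ne'
  rw [sum_congr rfl fun T hT => by rw [cliqueWeight, hsup T hT], sum_const, hcard, nsmul_eq_mul,
    mul_one_div_cancel hpos]

theorem forall_sum_cliqueWeight_cliquesThrough_eq_one_iff (ht : 3 ≤ t) :
    (∀ v, ∑ T ∈ G.cliquesThrough t v, G.cliqueWeight t T = 1) ↔
      (∀ v w, G.Reachable v w → v ≠ w → G.Adj v w) ∧
        ∀ v, t ≤ Nat.card {w | G.Reachable v w} := by
  constructor
  · intro h
    have hd (v : V) : t - 1 ≤ G.degree v := by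
      obtain ⟨T, hT⟩ := nonempty_of_sum_ne_zero ((h v).symm ▸ one_ne_zero)
      exact le_degree_of_mem_cliquesThrough (by omega) hT
    have hN (v : V) : G.IsClique (G.neighborSet v) := by
      rw [← coe_neighborFinset,
        ← forall_powersetCard_isClique_iff (k := t - 1) (by omega) (hd v),
        ← card_cliquesThrough_eq_choose_iff (by omega)]
      exact card_cliquesThrough_eq_choose_of_sum_eq_one (by omega) (h v)
    refine ⟨fun v w => adj_of_reachable_of_isClique_neighborSet hN, fun v => ?_⟩
    have := degree_add_one_le_card_reachable (G := G) v
    have := hd v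
    omega
  · rintro ⟨hadj, hcard⟩ v
    have hd : t - 1 ≤ G.degree v := by
      have := degree_add_one_eq_card_reachable hadj v
      have := hcard v
      omega
    refine sum_cliqueWeight_cliquesThrough_eq_one hd ?_ fun T hT => ?_
    · rw [card_cliquesThrough_eq_choose_iff (by omega)]
      intro S hS
      refine (isClique_neighborSet_of_adj_of_reachable hadj v).subset ?_
      rw [← coe_neighborFinset]
      exact coe_subset.2 (mem_powersetCard.1 hS).1
    · obtain ⟨hT, hvT⟩ := mem_cliquesThrough.1 hT
      refine le_antisymm (Finset.sup_le fun u hu => (degree_eq_of_reachable hadj ?_).le)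
        (le_sup (f := fun u => G.degree u) hvT)
      obtain rfl | hne := eq_or_ne u v
      · rfl
      · exact (hT.1 hu hvT hne).reachable

end SimpleGraph

open SimpleGraph

theorem stmt_13 {V : Type*} [Fintype V] [DecidableEq V]
    (G : SimpleGraph V) [DecidableRel G.Adj]
    (t n : ℕ) (ht : 1 ≤ t) (hn : Fintype.card V = n)
    (θ : Finset V → ℕ) (hθ : ∀ T : Finset V, θ T = T.sup (fun v => G.degree v)) :
    ∑ T ∈ G.cliqueFinset t, (1 : ℝ) / ((θ T).choose (t - 1) : ℝ) ≤ (n : ℝ) / t ∧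
    (3 ≤ t →
      (∑ T ∈ G.cliqueFinset t, (1 : ℝ) / ((θ T).choose (t - 1) : ℝ) = (n : ℝ) / t ↔
        (∀ v w : V, G.Reachable v w → v ≠ w → G.Adj v w) ∧
          ∀ v : V, t ≤ Nat.card {w : V | G.Reachable v w})) := by
  have hsum : ∑ T ∈ G.cliqueFinset t, (1 : ℝ) / ((θ T).choose (t - 1) : ℝ) =
      ∑ T ∈ G.cliqueFinset t, G.cliqueWeight t T :=
    sum_congr rfl fun T _ => by rw [hθ, cliqueWeight]
  have hcount : (∑ T ∈ G.cliqueFinset t, G.cliqueWeight t T) * t =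
      ∑ v, ∑ T ∈ G.cliquesThrough t v, G.cliqueWeight t T := by
    rw [sum_sum_cliquesThrough, nsmul_eq_mul, mul_comm]
  have hn' : (n : ℝ) = ∑ _v : V, 1 := by simp [hn]
  have ht' : (0 : ℝ) < t := by exact_mod_cast ht
  have hle (v : V) (_ : v ∈ univ) := sum_cliqueWeight_cliquesThrough_le_one (G := G) (v := v) ht
  rw [hsum, le_div_iff₀ ht', eq_div_iff ht'.ne', hcount, hn']
  exact ⟨sum_le_sum hle, fun ht3 => by
    rw [sum_eq_sum_iff_of_le hle, ← forall_sum_cliqueWeight_cliquesThrough_eq_one_iff ht3]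
    simp⟩
end

section
/- Let 1 ≤ i < q ≤ t be integers and let 𝓗 be a q-uniform hypergraph on n vertices such that Δ_i(𝓗) ≤ C(x - i, q - i) for some real number x ≥ q, where C denotes the generalized binomial coefficient. Then the number of t-cliques of 𝓗 is at most ( C(n, i) / C(x, i) ) · C(x, t), i.e. C(x, i) · N(K_t^{(q)}, 𝓗) ≤ C(n, i) · C(x, t). -/
/-- The generalized binomial coefficient `C(x, k) = x(x-1)⋯(x-k+1)/k!` for `x ≥ k-1`,
and `0` for `x < k-1`. -/
noncomputable def gchoose (x : ℝ) (k : ℕ) : ℝ :=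
  if x < (k : ℝ) - 1 then 0 else (∏ i ∈ Finset.range k, (x - i)) / (Nat.factorial k)

/-!
Fix an `i`-set `I`. Removing `I` turns the `t`-cliques through `I` into the `(t-i)`-cliques of
the link of `I`, a hypergraph with at most `Δ_i ≤ C(x-i, q-i)` edges of size `q-i`. Lovász's form
of the Kruskal–Katona theorem (an `r`-uniform family with at least `C(y, r)` members, `y ≥ r`, has
a shadow with at least `C(y, r-1)` members), iterated from level `t-i` down to level `q-i`, shows
that there are at most `C(x-i, t-i)` such cliques. Summing over all `I` counts each `t`-clique
`C(t, i)` times, and `C(x, i) C(x-i, t-i) = C(t, i) C(x, t)`.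

Lovász's theorem is proved as by Frankl. UV-compressions make the family shifted without changing
its size or enlarging its shadow. A shifted family splits along its least vertex `a` into `ℳ` (the
sets through `a`, with `a` removed) and `𝒩` (the sets avoiding `a`); shiftedness puts `∂𝒩` inside
`ℳ`, while `ℳ` and `∂ℳ` with `a` inserted are disjoint parts of the shadow, so Pascal's rule and
induction apply.
-/

open Finset Polynomial
open scoped FinsetFamily

section GChoose

variable {x y : ℝ} {k : ℕ}

lemma gchoose_of_lt (h : x < (k : ℝ) - 1) : gchoose x k = 0 := if_pos h

lemma gchoose_of_le (h : (k : ℝ) - 1 ≤ x) :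
    gchoose x k = (∏ j ∈ range k, (x - j)) / k.factorial := if_neg h.not_gt

lemma natCast_le_sub_one_of_mem_range {j : ℕ} (hj : j ∈ range k) : (j : ℝ) ≤ k - 1 := by
  have : (j : ℝ) + 1 ≤ k := by exact_mod_cast mem_range.1 hj
  linarith

lemma gchoose_nonneg (x : ℝ) (k : ℕ) : 0 ≤ gchoose x k := by
  rcases lt_or_ge x ((k : ℝ) - 1) with h | h
  · rw [gchoose_of_lt h]
  · rw [gchoose_of_le h]
    refine div_nonneg (prod_nonneg fun j hj ↦ ?_) (Nat.cast_nonneg _)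
    linarith [natCast_le_sub_one_of_mem_range hj]

lemma gchoose_eq_descPochhammer_eval (h : (k : ℝ) - 1 ≤ x) :
    gchoose x k = (descPochhammer ℝ k).eval x / k.factorial := by
  rw [gchoose_of_le h, descPochhammer_eval_eq_prod_range]

lemma gchoose_eq_ringChoose (h : (k : ℝ) - 1 ≤ x) : gchoose x k = Ring.choose x k := by
  rw [gchoose_eq_descPochhammer_eval h, Ring.choose_eq_smul, ← aeval_eq_smeval, aeval_def,
    eval₂_eq_eval_map, descPochhammer_map, smul_eq_mul, inv_mul_eq_div]

lemma gchoose_natCast (m k : ℕ) : gchoose m k = m.choose k := by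
  rcases lt_or_ge (m : ℝ) ((k : ℝ) - 1) with h | h
  · have : m < k := by exact_mod_cast (show (m : ℝ) < k by linarith)
    rw [gchoose_of_lt h, Nat.choose_eq_zero_of_lt this, Nat.cast_zero]
  · rw [gchoose_eq_ringChoose h, Ring.choose_natCast]

lemma gchoose_zero_right (hx : -1 ≤ x) : gchoose x 0 = 1 := by
  simp [gchoose_of_le (show ((0 : ℕ) : ℝ) - 1 ≤ x by simpa using hx)]

lemma gchoose_succ_eq_add (h : (k : ℝ) + 1 ≤ x) :
    gchoose x (k + 1) = gchoose (x - 1) k + gchoose (x - 1) (k + 1) := by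
  rw [gchoose_eq_ringChoose (by push_cast; linarith), gchoose_eq_ringChoose (by linarith),
    gchoose_eq_ringChoose (by push_cast; linarith), ← Ring.choose_succ_succ, sub_add_cancel]

lemma gchoose_mul_gchoose_sub {i t : ℕ} (hit : i ≤ t) (hx : (i : ℝ) - 1 ≤ x) :
    gchoose x i * gchoose (x - i) (t - i) = t.choose i * gchoose x t := by
  rcases lt_or_ge x ((t : ℝ) - 1) with h | h
  · rw [gchoose_of_lt h, gchoose_of_lt (x := x - i) (k := t - i) (by push_cast [hit]; linarith),
      mul_zero, mul_zero]
  · rw [gchoose_eq_ringChoose hx, gchoose_eq_ringChoose h,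
      gchoose_eq_ringChoose (by push_cast [hit]; linarith), ← Ring.choose_smul_choose _ hit,
      nsmul_eq_mul]

lemma gchoose_le_gchoose (k : ℕ) (hxy : x ≤ y) : gchoose x k ≤ gchoose y k := by
  rcases lt_or_ge x ((k : ℝ) - 1) with h | h
  · simp only [gchoose_of_lt h, gchoose_nonneg]
  · rw [gchoose_of_le h, gchoose_of_le (h.trans hxy)]
    gcongr
    exact fun j hj ↦ sub_nonneg.2 (by linarith [natCast_le_sub_one_of_mem_range hj])

lemma one_le_gchoose (h : (k : ℝ) ≤ x) : 1 ≤ gchoose x k := by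
  simpa [gchoose_natCast] using gchoose_le_gchoose k h

lemma gchoose_lt_gchoose (hk : 1 ≤ k) (hx : (k : ℝ) - 1 ≤ x) (hxy : x < y) :
    gchoose x k < gchoose y k := by
  rw [gchoose_of_le hx, gchoose_of_le (hx.trans hxy.le)]
  gcongr ?_ / _
  rcases hx.eq_or_lt with rfl | hx
  · rw [prod_eq_zero (i := k - 1) (by simp; omega) (by push_cast [hk]; ring)]
    exact prod_pos fun j hj ↦ by linarith [natCast_le_sub_one_of_mem_range hj]
  · exact prod_lt_prod_of_nonempty (fun j hj ↦ by linarith [natCast_le_sub_one_of_mem_range hj])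
      (fun j _ ↦ by linarith) (by simp; omega)

open Filter in
lemma exists_gchoose_eq (hk : 1 ≤ k) {m : ℝ} (hm : 1 ≤ m) :
    ∃ z, (k : ℝ) ≤ z ∧ gchoose z k = m := by
  set f : ℝ → ℝ := fun z ↦ (descPochhammer ℝ k).eval z / k.factorial
  have hf (z : ℝ) (hz : (k : ℝ) ≤ z) : gchoose z k = f z :=
    gchoose_eq_descPochhammer_eval (by linarith)
  have htop : Tendsto f atTop atTop := by
    refine Tendsto.atTop_div_const (by positivity) (tendsto_atTop_of_leadingCoeff_nonneg _ ?_ ?_)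
    · rw [degree_eq_natDegree (monic_descPochhammer ℝ k).ne_zero, descPochhammer_natDegree]
      exact_mod_cast hk
    · rw [(monic_descPochhammer ℝ k).leadingCoeff]
      exact zero_le_one
  have hm' : m ∈ Set.Ici (f k) := by
    rwa [Set.mem_Ici, ← hf k le_rfl, gchoose_natCast, Nat.choose_self, Nat.cast_one]
  obtain ⟨z, hz, rfl⟩ := intermediate_value_Ici (by fun_prop) htop hm'
  exact ⟨z, hz, hf z hz⟩

end GChoose

section Shadow

variable {α β : Type*} [DecidableEq α] {𝒜 : Finset (Finset α)} {s : Finset α} {r : ℕ}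

lemma Set.Sized.memberSubfamily (h𝒜 : (𝒜 : Set (Finset α)).Sized (r + 1)) (a : α) :
    (𝒜.memberSubfamily a : Set (Finset α)).Sized r := fun s hs ↦ by
  obtain ⟨hs, ha⟩ := mem_memberSubfamily.1 hs
  simpa [card_insert_of_notMem ha] using h𝒜 hs

lemma Set.Sized.nonMemberSubfamily (h𝒜 : (𝒜 : Set (Finset α)).Sized r) (a : α) :
    (𝒜.nonMemberSubfamily a : Set (Finset α)).Sized r :=
  fun _ hs ↦ h𝒜 (mem_nonMemberSubfamily.1 hs).1

lemma card_le_card_shadow (hs : s ∈ 𝒜) : #s ≤ #(∂ 𝒜) :=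
  calc #s = #(s.image s.erase) := (card_image_of_injOn s.erase_injOn).symm
    _ ≤ #(∂ 𝒜) := card_le_card fun t ht ↦ by
        obtain ⟨a, ha, rfl⟩ := mem_image.1 ht
        exact erase_mem_shadow hs ha

lemma card_memberSubfamily_add_card_shadow_le (a : α) (𝒜 : Finset (Finset α)) :
    #(𝒜.memberSubfamily a) + #(∂ (𝒜.memberSubfamily a)) ≤ #(∂ 𝒜) := by
  set ℳ := 𝒜.memberSubfamily a
  have hℳ : ℳ ⊆ ∂ 𝒜 := fun s hs ↦ by
    obtain ⟨h, ha⟩ := mem_memberSubfamily.1 hs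
    simpa [erase_insert ha] using erase_mem_shadow h (mem_insert_self a s)
  have hins : (∂ ℳ).image (insert a) ⊆ ∂ 𝒜 := by
    intro u hu
    obtain ⟨t, ht, rfl⟩ := mem_image.1 hu
    obtain ⟨s, hs, w, hw, rfl⟩ := mem_shadow_iff.1 ht
    obtain ⟨h, ha⟩ := mem_memberSubfamily.1 hs
    rw [← erase_insert_of_ne (ne_of_mem_of_not_mem hw ha).symm]
    exact erase_mem_shadow h (mem_insert_of_mem hw)
  have hinj : Set.InjOn (insert a) (∂ ℳ : Set (Finset α)) := fun t ht t' ht' h ↦ by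
    have hnot : ∀ t ∈ ∂ ℳ, a ∉ t := fun t ht ha ↦ by
      obtain ⟨s, hs, w, hw, rfl⟩ := mem_shadow_iff.1 ht
      exact (mem_memberSubfamily.1 hs).2 (mem_of_mem_erase ha)
    rw [← erase_insert (hnot t ht), h, erase_insert (hnot t' ht')]
  have hdisj : Disjoint ℳ ((∂ ℳ).image (insert a)) := disjoint_left.2 fun s hs hs' ↦ by
    obtain ⟨t, -, rfl⟩ := mem_image.1 hs'
    exact (mem_memberSubfamily.1 hs).2 (mem_insert_self a t)
  calc #ℳ + #(∂ ℳ) = #(ℳ ∪ (∂ ℳ).image (insert a)) := by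
        rw [card_union_of_disjoint hdisj, card_image_of_injOn hinj]
    _ ≤ #(∂ 𝒜) := card_le_card (union_subset hℳ hins)

lemma map_shadow [DecidableEq β] (f : α ↪ β) (𝒜 : Finset (Finset α)) :
    (∂ 𝒜).map (mapEmbedding f).toEmbedding = ∂ (𝒜.map (mapEmbedding f).toEmbedding) := by
  ext t
  simp only [mem_map, mem_shadow_iff, RelEmbedding.coe_toEmbedding, mapEmbedding_apply]
  constructor
  · rintro ⟨_, ⟨s, hs, a, ha, rfl⟩, rfl⟩
    exact ⟨_, ⟨s, hs, rfl⟩, f a, mem_map_of_mem f ha, (map_erase f s a).symm⟩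
  · rintro ⟨_, ⟨s, hs, rfl⟩, b, hb, rfl⟩
    obtain ⟨a, ha, rfl⟩ := mem_map.1 hb
    exact ⟨_, ⟨s, hs, a, ha, rfl⟩, map_erase f s a⟩

end Shadow

section Compression

lemma UV.sum_compression_lt {α : Type*} [GeneralizedBooleanAlgebra α]
    [DecidableRel (α := α) Disjoint] [DecidableLE α] [DecidableEq α] {u v : α} {s : Finset α}
    (f : α → ℕ) (hf : ∀ a, UV.compress u v a ≠ a → f (UV.compress u v a) < f a)
    (h : UV.compression u v s ≠ s) :
    ∑ a ∈ UV.compression u v s, f a < ∑ a ∈ s, f a := by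
  rw [UV.compression] at h ⊢
  have hne : {a ∈ s | UV.compress u v a ∉ s}.Nonempty := by
    refine nonempty_iff_ne_empty.2 fun hempty ↦ h ?_
    rw [filter_image, hempty, image_empty, union_empty, filter_true_of_mem]
    simpa using hempty
  rw [sum_union UV.compress_disjoint, filter_image, sum_image UV.compress_injOn,
    ← sum_filter_add_sum_filter_not s (fun a ↦ UV.compress u v a ∈ s)]
  refine add_lt_add_right (sum_lt_sum_of_nonempty hne fun a ha ↦ hf a ?_) _
  exact fun h ↦ (mem_filter.1 ha).2 (by rw [h]; exact (mem_filter.1 ha).1)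

lemma UV.compress_singleton_singleton {α : Type*} [DecidableEq α] {u v : α} {s : Finset α}
    (huv : u ≠ v) (hv : v ∈ s) (hu : u ∉ s) : UV.compress {u} {v} s = insert u (s.erase v) := by
  rw [UV.compress_of_disjoint_of_le (disjoint_singleton_left.2 hu) (singleton_subset_iff.2 hv)]
  ext w
  simp only [sup_eq_union, mem_sdiff, mem_union, mem_singleton, mem_insert, mem_erase]
  grind

lemma UV.sum_compress_lt {u v : ℕ} (huv : u < v) {s : Finset ℕ}
    (h : UV.compress {u} {v} s ≠ s) : ∑ x ∈ UV.compress {u} {v} s, x < ∑ x ∈ s, x := by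
  by_cases hs : v ∈ s ∧ u ∉ s
  · have hu : u ∉ s.erase v := fun h ↦ hs.2 (mem_of_mem_erase h)
    rw [UV.compress_singleton_singleton huv.ne hs.1 hs.2, sum_insert hu, ← add_sum_erase s _ hs.1]
    omega
  · refine absurd ?_ h
    rw [UV.compress, if_neg]
    rintro ⟨hu, hv⟩
    exact hs ⟨singleton_subset_iff.1 hv, disjoint_singleton_left.1 hu⟩

end Compression

section Shifted

def IsShifted (a : ℕ) (𝒜 : Finset (Finset ℕ)) : Prop :=
  (∀ s ∈ 𝒜, ∀ x ∈ s, a ≤ x) ∧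
    ∀ s ∈ 𝒜, ∀ ⦃u v : ℕ⦄, a ≤ u → u < v → v ∈ s → u ∉ s → insert u (s.erase v) ∈ 𝒜

variable {a : ℕ} {𝒜 : Finset (Finset ℕ)}

lemma IsShifted.memberSubfamily (h : IsShifted a 𝒜) :
    IsShifted (a + 1) (𝒜.memberSubfamily a) := by
  refine ⟨fun s hs x hx ↦ ?_, fun s hs u v hau huv hv hu ↦ ?_⟩
  · obtain ⟨hs, ha⟩ := mem_memberSubfamily.1 hs
    have := h.1 _ hs x (mem_insert_of_mem hx)
    have : x ≠ a := ne_of_mem_of_not_mem hx ha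
    omega
  · obtain ⟨hs, ha⟩ := mem_memberSubfamily.1 hs
    have hshift := h.2 _ hs (by omega) huv (mem_insert_of_mem hv) (by simp [hu]; omega)
    rw [erase_insert_of_ne (by omega), insert_comm] at hshift
    exact mem_memberSubfamily.2 ⟨hshift, by simp [ha]; omega⟩

lemma IsShifted.nonMemberSubfamily (h : IsShifted a 𝒜) :
    IsShifted (a + 1) (𝒜.nonMemberSubfamily a) := by
  refine ⟨fun s hs x hx ↦ ?_, fun s hs u v hau huv hv hu ↦ ?_⟩
  · obtain ⟨hs, ha⟩ := mem_nonMemberSubfamily.1 hs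
    have := h.1 _ hs x hx
    have : x ≠ a := ne_of_mem_of_not_mem hx ha
    omega
  · obtain ⟨hs, ha⟩ := mem_nonMemberSubfamily.1 hs
    exact mem_nonMemberSubfamily.2 ⟨h.2 _ hs (by omega) huv hv hu, by simp [ha]; omega⟩

lemma IsShifted.shadow_nonMemberSubfamily_subset (h : IsShifted a 𝒜) :
    ∂ (𝒜.nonMemberSubfamily a) ⊆ 𝒜.memberSubfamily a := by
  intro t ht
  obtain ⟨s, hs, w, hw, rfl⟩ := mem_shadow_iff.1 ht
  obtain ⟨hs, ha⟩ := mem_nonMemberSubfamily.1 hs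
  have haw : a < w := lt_of_le_of_ne (h.1 s hs w hw) (ne_of_mem_of_not_mem hw ha).symm
  exact mem_memberSubfamily.2 ⟨h.2 s hs le_rfl haw hw ha, fun h ↦ ha (mem_of_mem_erase h)⟩

lemma IsShifted.card_le_card_memberSubfamily (h : IsShifted a 𝒜) {s : Finset ℕ}
    (hs : s ∈ 𝒜.nonMemberSubfamily a) : #s ≤ #(𝒜.memberSubfamily a) :=
  (card_le_card_shadow hs).trans (card_le_card h.shadow_nonMemberSubfamily_subset)

theorem exists_isShifted {r : ℕ} {𝒜 : Finset (Finset ℕ)} (h𝒜 : (𝒜 : Set (Finset ℕ)).Sized r) :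
    ∃ ℬ : Finset (Finset ℕ), (ℬ : Set (Finset ℕ)).Sized r ∧ #ℬ = #𝒜 ∧ #(∂ ℬ) ≤ #(∂ 𝒜) ∧
      IsShifted 0 ℬ := by
  by_cases hcomp : ∀ u v, u < v → UV.IsCompressed {u} {v} 𝒜
  · refine ⟨𝒜, h𝒜, rfl, le_rfl, fun _ _ x _ ↦ x.zero_le, fun s hs u v _ huv hv hu ↦ ?_⟩
    have := UV.compress_mem_compression (u := {u}) (v := {v}) hs
    rwa [hcomp u v huv, UV.compress_singleton_singleton huv.ne hv hu] at this
  · push Not at hcomp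
    obtain ⟨u, v, huv, hne⟩ := hcomp
    have : ∑ s ∈ UV.compression {u} {v} 𝒜, ∑ x ∈ s, x < ∑ s ∈ 𝒜, ∑ x ∈ s, x :=
      UV.sum_compression_lt _ (fun _ ↦ UV.sum_compress_lt huv) hne
    obtain ⟨ℬ, hℬ, hcard, hshadow, hshift⟩ :=
      exists_isShifted (h𝒜.uvCompression (u := {u}) (v := {v}) rfl)
    refine ⟨ℬ, hℬ, hcard.trans (UV.card_compression _ _ _), hshadow.trans ?_, hshift⟩
    refine UV.card_shadow_compression_le _ _ fun x hx ↦ ⟨v, mem_singleton_self v, ?_⟩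
    rw [mem_singleton.1 hx, erase_singleton, erase_singleton]
    exact UV.isCompressed_self _ _
termination_by ∑ s ∈ 𝒜, ∑ x ∈ s, x

theorem IsShifted.gchoose_le_card_shadow {a r : ℕ} {𝒜 : Finset (Finset ℕ)} {y : ℝ}
    (h : IsShifted a 𝒜)
    (h𝒜 : (𝒜 : Set (Finset ℕ)).Sized (r + 1)) (hy : (r : ℝ) + 1 ≤ y)
    (hcard : gchoose y (r + 1) ≤ #𝒜) : gchoose y r ≤ #(∂ 𝒜) := by
  match r with
  | 0 =>
    obtain ⟨s, hs⟩ : 𝒜.Nonempty := card_pos.1 <| Nat.one_le_cast.1 <|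
      (one_le_gchoose (by simpa using hy)).trans hcard
    rw [gchoose_zero_right (by push_cast at hy; linarith)]
    exact_mod_cast h𝒜 hs ▸ card_le_card_shadow hs
  | r + 1 =>
    set ℳ := 𝒜.memberSubfamily a
    set 𝒩 := 𝒜.nonMemberSubfamily a
    push_cast at hy
    have hsplit : #ℳ + #𝒩 = #𝒜 := card_memberSubfamily_add_card_nonMemberSubfamily a 𝒜
    -- Otherwise `𝒩` is so large that its shadow, which lies in `ℳ`, is too large for `ℳ`.
    have hℳ : gchoose (y - 1) (r + 1) ≤ #ℳ := by
      by_contra! hℳ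
      have h𝒩 : gchoose (y - 1) (r + 1 + 1) < #𝒩 := by
        have : (#ℳ : ℝ) + #𝒩 = #𝒜 := by exact_mod_cast hsplit
        linarith [gchoose_succ_eq_add (x := y) (k := r + 1) (by push_cast; linarith)]
      obtain ⟨s, hs⟩ : 𝒩.Nonempty := card_pos.1 <| Nat.cast_pos.1 <|
        (gchoose_nonneg _ _).trans_lt h𝒩
      have hsℳ : r + 2 ≤ #ℳ := h𝒜.nonMemberSubfamily a hs ▸ h.card_le_card_memberSubfamily hs
      rcases le_or_gt ((r : ℝ) + 2) (y - 1) with hy' | hy'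
      · have : #𝒩 < #𝒜 := by omega
        have := h.nonMemberSubfamily.gchoose_le_card_shadow (h𝒜.nonMemberSubfamily a)
          (by push_cast; linarith) h𝒩.le
        have : (#(∂ 𝒩) : ℝ) ≤ #ℳ := by
          exact_mod_cast card_le_card h.shadow_nonMemberSubfamily_subset
        linarith
      · have := gchoose_le_gchoose (r + 1) (show y - 1 ≤ ((r + 2 : ℕ) : ℝ) by push_cast; linarith)
        rw [gchoose_natCast, Nat.choose_succ_self_right] at this
        have : ((r + 2 : ℕ) : ℝ) ≤ #ℳ := by exact_mod_cast hsℳ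
        linarith
    have ih := h.memberSubfamily.gchoose_le_card_shadow (h𝒜.memberSubfamily a) (by linarith) hℳ
    calc gchoose y (r + 1) = gchoose (y - 1) r + gchoose (y - 1) (r + 1) :=
          gchoose_succ_eq_add (by linarith)
      _ ≤ #(∂ ℳ) + #ℳ := add_le_add ih hℳ
      _ ≤ #(∂ 𝒜) := by
          exact_mod_cast (add_comm _ _).trans_le (card_memberSubfamily_add_card_shadow_le a 𝒜)
termination_by (r, #𝒜)

end Shifted

section Hypergraph

variable {α : Type*} [DecidableEq α]

theorem gchoose_le_card_shadow [Countable α] {r : ℕ} {𝒜 : Finset (Finset α)} {y : ℝ}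
    (h𝒜 : (𝒜 : Set (Finset α)).Sized (r + 1)) (hy : (r : ℝ) + 1 ≤ y)
    (hcard : gchoose y (r + 1) ≤ #𝒜) : gchoose y r ≤ #(∂ 𝒜) := by
  obtain ⟨f, hf⟩ := Countable.exists_injective_nat α
  set e := (mapEmbedding ⟨f, hf⟩).toEmbedding
  have he : ((𝒜.map e : Finset (Finset ℕ)) : Set (Finset ℕ)).Sized (r + 1) := fun s hs ↦ by
    obtain ⟨s', hs', rfl⟩ := mem_map.1 (mem_coe.1 hs)
    simpa [e] using h𝒜 hs'
  obtain ⟨ℬ, hℬ, hcardℬ, hshadow, hshift⟩ := exists_isShifted he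
  calc gchoose y r ≤ #(∂ ℬ) :=
        hshift.gchoose_le_card_shadow hℬ hy (by rwa [hcardℬ, card_map])
    _ ≤ #(∂ (𝒜.map e)) := by exact_mod_cast hshadow
    _ = #(∂ 𝒜) := by rw [← map_shadow, card_map]

theorem gchoose_le_card_shadow_iterate [Countable α] {r d : ℕ} {𝒜 : Finset (Finset α)} {y : ℝ}
    (h𝒜 : (𝒜 : Set (Finset α)).Sized (r + d)) (hy : ((r + d : ℕ) : ℝ) ≤ y)
    (hcard : gchoose y (r + d) ≤ #𝒜) : gchoose y r ≤ #(∂^[d] 𝒜) := by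
  induction d generalizing 𝒜 with
  | zero => simpa using hcard
  | succ d ih =>
    rw [Function.iterate_succ_apply]
    push_cast at hy
    exact ih (by simpa using h𝒜.shadow) (by push_cast; linarith)
      (gchoose_le_card_shadow h𝒜 (by push_cast; linarith) hcard)

theorem card_le_gchoose_of_powersetCard_subset [Countable α] {𝒦 ℰ : Finset (Finset α)}
    {s d : ℕ} {y : ℝ} (hs : 1 ≤ s) (hy : (s : ℝ) ≤ y) (h𝒦 : (𝒦 : Set (Finset α)).Sized (s + d))
    (h𝒦ℰ : ∀ K ∈ 𝒦, K.powersetCard s ⊆ ℰ) (hℰ : #ℰ ≤ gchoose y s) :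
    #𝒦 ≤ gchoose y (s + d) := by
  by_contra! hlt
  obtain ⟨z, hz, hgz⟩ := exists_gchoose_eq (k := s + d) (m := #𝒦) (by omega) <|
    Nat.one_le_cast.2 <| Nat.cast_pos.1 <| (gchoose_nonneg y _).trans_lt hlt
  have hyz : y < z := by
    by_contra! h
    linarith [gchoose_le_gchoose (s + d) h]
  have hshadow : ∂^[d] 𝒦 ⊆ ℰ := fun t ht ↦ by
    obtain ⟨K, hK, htK, hcard⟩ := mem_shadow_iterate_iff_exists_sdiff.1 ht
    refine h𝒦ℰ K hK (mem_powersetCard.2 ⟨htK, ?_⟩)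
    have := card_sdiff_add_card_eq_card htK
    have := h𝒦 hK
    omega
  have : (#(∂^[d] 𝒦) : ℝ) ≤ #ℰ := by exact_mod_cast card_le_card hshadow
  linarith [gchoose_le_card_shadow_iterate h𝒦 hz hgz.le, gchoose_lt_gchoose hs (by linarith) hyz]

theorem card_filter_superset_le [Countable α] {E 𝒯 : Finset (Finset α)} {I : Finset α}
    {q t : ℕ} {y : ℝ} (hIq : #I < q) (hqt : q ≤ t) (hy : (q : ℝ) - #I ≤ y)
    (h𝒯 : ∀ T ∈ 𝒯, #T = t ∧ ∀ S ∈ T.powersetCard q, S ∈ E)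
    (hE : #{e ∈ E | I ⊆ e} ≤ gchoose y (q - #I)) :
    #{T ∈ 𝒯 | I ⊆ T} ≤ gchoose y (t - #I) := by
  have hinj : Set.InjOn (· \ I) {T | I ⊆ T} := fun T hT T' hT' h ↦ by
    rw [← union_sdiff_of_subset hT, ← union_sdiff_of_subset hT']
    exact congrArg (I ∪ ·) h
  have hcard : #({T ∈ 𝒯 | I ⊆ T}.image (· \ I)) = #{T ∈ 𝒯 | I ⊆ T} :=
    card_image_of_injOn fun T hT T' hT' ↦ hinj (mem_filter.1 hT).2 (mem_filter.1 hT').2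
  rw [← hcard, show t - #I = q - #I + (t - q) by omega]
  refine card_le_gchoose_of_powersetCard_subset (ℰ := {e ∈ E | I ⊆ e}.image (· \ I))
    (by omega) (by push_cast [hIq.le]; linarith) ?_ ?_ ((Nat.cast_le.2 card_image_le).trans hE)
  · intro K hK
    obtain ⟨T, hT, rfl⟩ := mem_image.1 hK
    obtain ⟨hT, hIT⟩ := mem_filter.1 hT
    simp [card_sdiff_of_subset hIT, (h𝒯 T hT).1]
    omega
  · intro K hK S hS
    obtain ⟨T, hT, rfl⟩ := mem_image.1 hK
    obtain ⟨hT, hIT⟩ := mem_filter.1 hT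
    obtain ⟨hST, hS⟩ := mem_powersetCard.1 hS
    have hdisj : Disjoint I S := disjoint_of_subset_right hST disjoint_sdiff
    refine mem_image.2 ⟨I ∪ S, mem_filter.2 ⟨(h𝒯 T hT).2 _ ?_, subset_union_left⟩, ?_⟩
    · refine mem_powersetCard.2 ⟨union_subset hIT (hST.trans sdiff_subset), ?_⟩
      rw [card_union_of_disjoint hdisj, hS]
      omega
    · exact union_sdiff_cancel_left hdisj

theorem card_mul_choose_le [Fintype α] {𝒯 : Finset (Finset α)} {i t : ℕ}
    (h𝒯 : ∀ T ∈ 𝒯, #T = t) {b : ℝ}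
    (hb : ∀ I : Finset α, #I = i → (#{T ∈ 𝒯 | I ⊆ T} : ℝ) ≤ b) :
    (#𝒯 * t.choose i : ℝ) ≤ (Fintype.card α).choose i * b := by
  have hcount : ∑ I ∈ powersetCard i univ, #{T ∈ 𝒯 | I ⊆ T} = #𝒯 * t.choose i :=
    calc ∑ I ∈ powersetCard i univ, #{T ∈ 𝒯 | I ⊆ T}
        = ∑ T ∈ 𝒯, #{I ∈ powersetCard i univ | I ⊆ T} :=
          sum_card_bipartiteAbove_eq_sum_card_bipartiteBelow _
      _ = #𝒯 * t.choose i := sum_const_nat fun T hT ↦ by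
          rw [← h𝒯 T hT, ← card_powersetCard]
          congr 1
          ext I
          simp [and_comm]
  calc (#𝒯 * t.choose i : ℝ) = ∑ I ∈ powersetCard i univ, (#{T ∈ 𝒯 | I ⊆ T} : ℝ) := by
        exact_mod_cast hcount.symm
    _ ≤ ∑ I ∈ powersetCard i univ, b := sum_le_sum fun I hI ↦ hb I (mem_powersetCard.1 hI).2
    _ = (Fintype.card α).choose i * b := by simp

end Hypergraph

theorem stmt_19_general {V : Type*} [Fintype V] [DecidableEq V]
    (q t i n : ℕ) (hiq : i < q) (hqt : q ≤ t)
    (hn : Fintype.card V = n)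
    -- the edge set of a `q`-uniform hypergraph `𝓗` on `V`
    (E : Finset (Finset V))
    (x : ℝ) (hx : (q : ℝ) ≤ x)
    -- `Δ_i(𝓗) ≤ C(x - i, q - i)`
    (hΔ : ∀ I : Finset V, I.card = i →
      ((E.filter fun e => I ⊆ e).card : ℝ) ≤ gchoose (x - i) (q - i))
    -- the set of `t`-cliques of `𝓗`
    (cliques : Finset (Finset V))
    (hcl : ∀ T : Finset V,
      T ∈ cliques ↔ T.card = t ∧ ∀ S ∈ T.powersetCard q, S ∈ E) :
    gchoose x i * (cliques.card : ℝ) ≤ (n.choose i : ℝ) * gchoose x t := by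
  have hlink (I : Finset V) (hI : #I = i) :
      (#{T ∈ cliques | I ⊆ T} : ℝ) ≤ gchoose (x - i) (t - i) := by
    subst hI
    exact card_filter_superset_le hiq hqt (by linarith) (fun T ↦ (hcl T).1) (hΔ I rfl)
  have hcount := card_mul_choose_le (fun T hT ↦ ((hcl T).1 hT).1) hlink
  rw [hn] at hcount
  have hit : i ≤ t := hiq.le.trans hqt
  refine le_of_mul_le_mul_right ?_ (Nat.cast_pos.2 (Nat.choose_pos hit) : (0 : ℝ) < t.choose i)
  calc gchoose x i * #cliques * t.choose i = gchoose x i * (#cliques * t.choose i) := by ring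
    _ ≤ gchoose x i * (n.choose i * gchoose (x - i) (t - i)) :=
        mul_le_mul_of_nonneg_left hcount (gchoose_nonneg x i)
    _ = n.choose i * gchoose x t * t.choose i := by
        rw [mul_left_comm, gchoose_mul_gchoose_sub hit (by linarith [(Nat.cast_lt (α := ℝ)).2 hiq])]
        ring

theorem stmt_19 {V : Type*} [Fintype V] [DecidableEq V]
    (q t i n : ℕ) (hi : 1 ≤ i) (hiq : i < q) (hqt : q ≤ t)
    (hn : Fintype.card V = n)
    -- the edge set of a `q`-uniform hypergraph `𝓗` on `V`
    (E : Finset (Finset V)) (hunif : ∀ e ∈ E, e.card = q)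
    (x : ℝ) (hx : (q : ℝ) ≤ x)
    -- `Δ_i(𝓗) ≤ C(x - i, q - i)`
    (hΔ : ∀ I : Finset V, I.card = i →
      ((E.filter fun e => I ⊆ e).card : ℝ) ≤ gchoose (x - i) (q - i))
    -- the set of `t`-cliques of `𝓗`
    (cliques : Finset (Finset V))
    (hcl : ∀ T : Finset V,
      T ∈ cliques ↔ T.card = t ∧ ∀ S ∈ T.powersetCard q, S ∈ E) :
    gchoose x i * (cliques.card : ℝ) ≤ (n.choose i : ℝ) * gchoose x t :=
  stmt_19_general q t i n hiq hqt hn E x hx hΔ cliques hcl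
end
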